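/- arXiv:1006.0092 — 9 statements merged into one kernel-verified Lean document; each statement's English description precedes it below -/
import Mathlib

section
/- For the p-typical Witt vectors of length 1 (i.e., the classical W_2), the ring W_1(ℤ) is isomorphic to ℤ[x]/(x² - p·x), with x corresponding to the Verschiebung element V_p(1). -/
/-!
Since `V 1 * V 1 = V (1 * F (V 1)) = V p = p * V 1`, sending `X` to `V 1` defines a ring map
`ℤ[X]/(X² - pX) → W_1(ℤ)`, and it suffices to see that every element of `W_1(ℤ)` is uniquely of
the form `m + n * V 1`. The ghost components of `m + n * V 1` are `(m, m + p n)`, so its Witt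
coordinates are `(m, n + (m - m^p)/p)`; by Fermat's little theorem this is a triangular bijection
of `ℤ × ℤ`.
-/

open Polynomial

namespace Polynomial

variable {R : Type*} [CommRing R]

theorem monic_X_sq_sub_C_mul_X (a : R) : (X ^ 2 - C a * X).Monic := by
  monicity!

theorem natDegree_X_sq_sub_C_mul_X [Nontrivial R] (a : R) : (X ^ 2 - C a * X).natDegree = 2 := by
  compute_degree!

end Polynomial

namespace AdjoinRoot

variable {R : Type*} [CommRing R] {g : R[X]}

theorem exists_of_add_of_mul_root_eq (hg : g.Monic) (hdeg : g.natDegree = 2) (x : AdjoinRoot g) :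
    ∃ a b : R, of g a + of g b * root g = x := by
  obtain ⟨f, rfl⟩ := mk_surjective x
  have hlt : (f %ₘ g).natDegree ≤ 1 := by
    have := natDegree_modByMonic_lt f hg (by rintro rfl; simp at hdeg)
    omega
  obtain ⟨b, a, hab⟩ := exists_eq_X_add_C_of_natDegree_le_one hlt
  refine ⟨a, b, ?_⟩
  rw [← mk_leftInverse hg (mk g f), modByMonicHom_mk, hab, map_add, map_mul, mk_C, mk_C, mk_X,
    add_comm]

end AdjoinRoot

namespace WittVector

variable {p : ℕ} [Fact p.Prime] {R : Type*} [CommRing R]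

local notation "𝕎" => WittVector p

theorem verschiebung_one_mul_verschiebung_one :
    verschiebung (1 : 𝕎 R) * verschiebung 1 = (p : 𝕎 R) * verschiebung 1 := by
  rw [← verschiebung_mul_frobenius, frobenius_verschiebung, one_mul, one_mul, ← nsmul_eq_mul,
    ← nsmul_one, map_nsmul]

theorem ghostComponent_one_eq (w : 𝕎 R) :
    ghostComponent 1 w = w.coeff 0 ^ p + p * w.coeff 1 := by
  simp only [ghostComponent_apply, wittPolynomial_one, map_natCast, map_add, map_mul,
    MvPolynomial.aeval_X, map_pow]
  ring

theorem ghostComponent_zero_eq (w : 𝕎 R) : ghostComponent 0 w = w.coeff 0 := by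
  simp [ghostComponent_apply, wittPolynomial_zero]

theorem truncate_two_eq_iff {x y : 𝕎 R} :
    truncate 2 x = truncate 2 y ↔ x.coeff 0 = y.coeff 0 ∧ x.coeff 1 = y.coeff 1 := by
  constructor
  · intro h
    exact ⟨by simpa using congrArg (TruncatedWittVector.coeff 0) h,
      by simpa using congrArg (TruncatedWittVector.coeff 1) h⟩
  · rintro ⟨h0, h1⟩
    ext i
    fin_cases i <;> simpa

theorem ghostComponent_one_intCast_add_mul_verschiebung_one (m n : ℤ) :
    ghostComponent 1 ((m : 𝕎 R) + (n : 𝕎 R) * verschiebung 1) = (m : R) + p * n := by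
  rw [map_add, map_mul, map_intCast, map_intCast, ghostComponent_verschiebung, map_one, mul_one,
    mul_comm]

theorem coeff_zero_intCast_add_mul_verschiebung_one (m n : ℤ) :
    ((m : 𝕎 R) + (n : 𝕎 R) * verschiebung 1).coeff 0 = (m : R) := by
  rw [← ghostComponent_zero_eq, map_add, map_mul, ghostComponent_zero_verschiebung, mul_zero,
    add_zero, map_intCast]

theorem coeff_one_intCast_add_mul_verschiebung_one (m n : ℤ) :
    (m : R) ^ p + p * ((m : 𝕎 R) + (n : 𝕎 R) * verschiebung 1).coeff 1 = m + p * n := by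
  have h := ghostComponent_one_eq ((m : 𝕎 R) + (n : 𝕎 R) * verschiebung 1)
  rwa [ghostComponent_one_intCast_add_mul_verschiebung_one,
    coeff_zero_intCast_add_mul_verschiebung_one, eq_comm] at h

theorem truncate_intCast_add_mul_verschiebung_one_eq_zero_iff {m n : ℤ} :
    truncate 2 ((m : 𝕎 ℤ) + (n : 𝕎 ℤ) * verschiebung 1) = 0 ↔ m = 0 ∧ n = 0 := by
  refine ⟨fun h => ?_, by rintro ⟨rfl, rfl⟩; simp⟩
  rw [← map_zero (truncate 2), truncate_two_eq_iff] at h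
  obtain ⟨h0, h1⟩ := h
  have hm : m = 0 := by simpa [coeff_zero_intCast_add_mul_verschiebung_one] using h0
  have hpn := coeff_one_intCast_add_mul_verschiebung_one (p := p) (R := ℤ) m n
  rw [h1, hm] at hpn
  refine ⟨hm, ?_⟩
  simpa [(Fact.out : p.Prime).ne_zero] using hpn

theorem exists_truncate_intCast_add_mul_verschiebung_one_eq (w : TruncatedWittVector p 2 ℤ) :
    ∃ m n : ℤ, truncate 2 ((m : 𝕎 ℤ) + (n : 𝕎 ℤ) * verschiebung 1) = w := by
  obtain ⟨w, rfl⟩ := truncate_surjective (p := p) 2 ℤ w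
  have hp := (Fact.out : p.Prime).ne_zero
  obtain ⟨c, hc⟩ : (p : ℤ) ∣ w.coeff 0 - w.coeff 0 ^ p := by
    rw [← ZMod.intCast_eq_intCast_iff_dvd_sub, Int.cast_pow, ZMod.pow_card]
  have h1 :=
    coeff_one_intCast_add_mul_verschiebung_one (p := p) (R := ℤ) (w.coeff 0) (w.coeff 1 - c)
  simp only [Int.cast_id] at h1
  exact ⟨_, _, truncate_two_eq_iff.mpr ⟨coeff_zero_intCast_add_mul_verschiebung_one _ _,
    mul_left_cancel₀ (Int.natCast_ne_zero.mpr hp) (by linear_combination h1 + hc)⟩⟩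

variable (p R) in
noncomputable def verschiebungOneLift :
    AdjoinRoot (X ^ 2 - C (p : ℤ) * X) →+* TruncatedWittVector p 2 R :=
  AdjoinRoot.lift (Int.castRingHom _) (truncate 2 (verschiebung 1)) <| by
    rw [eval₂_sub, eval₂_X_pow, eval₂_mul, eval₂_C, eval₂_X, sq, ← map_mul,
      verschiebung_one_mul_verschiebung_one, map_mul, map_natCast, eq_intCast, Int.cast_natCast,
      sub_self]

theorem verschiebungOneLift_root :
    verschiebungOneLift p R (AdjoinRoot.root _) = truncate 2 (verschiebung 1) :=
  AdjoinRoot.lift_root _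

theorem verschiebungOneLift_of_add_of_mul_root (m n : ℤ) :
    verschiebungOneLift p R (AdjoinRoot.of _ m + AdjoinRoot.of _ n * AdjoinRoot.root _) =
      truncate 2 ((m : 𝕎 R) + (n : 𝕎 R) * verschiebung 1) := by
  simp [verschiebungOneLift]

theorem verschiebungOneLift_bijective : Function.Bijective (verschiebungOneLift p ℤ) := by
  constructor
  · refine (injective_iff_map_eq_zero _).mpr fun x hx => ?_
    obtain ⟨m, n, rfl⟩ := AdjoinRoot.exists_of_add_of_mul_root_eq (monic_X_sq_sub_C_mul_X _)
      (natDegree_X_sq_sub_C_mul_X _) x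
    rw [verschiebungOneLift_of_add_of_mul_root] at hx
    obtain ⟨rfl, rfl⟩ := truncate_intCast_add_mul_verschiebung_one_eq_zero_iff.mp hx
    simp
  · intro w
    obtain ⟨m, n, rfl⟩ := exists_truncate_intCast_add_mul_verschiebung_one_eq w
    exact ⟨_, verschiebungOneLift_of_add_of_mul_root m n⟩

end WittVector

/-- For the `p`-typical Witt vectors of length 1 (normalized indexing, i.e.
the classical `W_2`, formalized as `TruncatedWittVector p 2`), the ring `W_1(ℤ)` is isomorphic
to `ℤ[x]/(x² - p·x)`, with `x` corresponding to the Verschiebung element `V_p(1)`. -/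
theorem witt_length_one_int_presentation (p : ℕ) [Fact p.Prime] :
    ∃ e : (Polynomial ℤ ⧸ Ideal.span
        {Polynomial.X ^ 2 - Polynomial.C (p : ℤ) * Polynomial.X}) ≃+*
        TruncatedWittVector p 2 ℤ,
      e (Ideal.Quotient.mk _ Polynomial.X) =
        WittVector.truncate 2 (WittVector.verschiebung (1 : WittVector p ℤ)) :=
  ⟨RingEquiv.ofBijective _ WittVector.verschiebungOneLift_bijective,
    WittVector.verschiebungOneLift_root⟩
end

section
/- For every n ≥ 0, the p-typical Witt ring W_n(ℤ) is isomorphic to ℤ[x_1,…,x_n]/(x_i·x_j − p^i·x_j : 1 ≤ i ≤ j ≤ n), where x_i corresponds to V_p^i(1). -/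
open WittVector Finset MvPolynomial

namespace WittIntAux

variable (p : ℕ) [Fact p.Prime]

/-- `vv p i = V^i(1)` in the `p`-typical Witt vectors of `ℤ`. -/
noncomputable def vv (i : ℕ) : WittVector p ℤ :=
  (fun x => WittVector.verschiebung x)^[i] (1 : WittVector p ℤ)

lemma hp_pos : 0 < p := (Fact.out : p.Prime).pos

lemma hp_ne_zero : (p : ℤ) ≠ 0 := by
  exact_mod_cast (Fact.out : p.Prime).ne_zero

lemma ghost_eq_sum (w : WittVector p ℤ) (k : ℕ) :
    ghostComponent k w = ∑ i ∈ range (k + 1), (p : ℤ) ^ i * w.coeff i ^ p ^ (k - i) := by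
  rw [ghostComponent_apply, aeval_wittPolynomial]

lemma ghost_vv (i k : ℕ) :
    ghostComponent k (vv p i) = if i ≤ k then (p : ℤ) ^ i else 0 := by
  induction i generalizing k with
  | zero => simp [vv]
  | succ i ih =>
    have hstep : vv p (i + 1) = verschiebung (vv p i) := by
      show (fun x => verschiebung x)^[i + 1] 1 = _
      rw [Function.iterate_succ_apply']
      rfl
    rw [hstep]
    cases k with
    | zero =>
      rw [ghostComponent_zero_verschiebung, if_neg (by omega)]
    | succ k =>
      rw [ghostComponent_verschiebung, ih]
      by_cases h : i ≤ k
      · rw [if_pos h, if_pos (by omega), pow_succ]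
        ring
      · rw [if_neg h, if_neg (by omega), mul_zero]

lemma coeff_eq_of_ghost (w w' : WittVector p ℤ) (k : ℕ)
    (h : ∀ m ≤ k, ghostComponent m w = ghostComponent m w') :
    ∀ m ≤ k, w.coeff m = w'.coeff m := by
  intro m
  induction m using Nat.strong_induction_on with
  | _ m ih =>
    intro hm
    have h1 := h m hm
    rw [ghost_eq_sum, ghost_eq_sum, sum_range_succ, sum_range_succ] at h1
    have h2 : ∑ i ∈ range m, (p : ℤ) ^ i * w.coeff i ^ p ^ (m - i)
        = ∑ i ∈ range m, (p : ℤ) ^ i * w'.coeff i ^ p ^ (m - i) := by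
      refine sum_congr rfl fun i hi => ?_
      rw [ih i (mem_range.mp hi) (le_trans (le_of_lt (mem_range.mp hi)) hm)]
    rw [h2] at h1
    have h3 : (p : ℤ) ^ m * w.coeff m ^ p ^ (m - m)
        = (p : ℤ) ^ m * w'.coeff m ^ p ^ (m - m) := by linarith
    have hpm : ((p : ℤ)) ^ m ≠ 0 := pow_ne_zero _ (hp_ne_zero p)
    have := mul_left_cancel₀ hpm h3
    simpa [Nat.sub_self] using this

lemma ghost_inj (w w' : WittVector p ℤ)
    (h : ∀ k, ghostComponent k w = ghostComponent k w') : w = w' := by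
  apply WittVector.ext
  intro m
  exact coeff_eq_of_ghost p w w' m (fun l _ => h l) m le_rfl

lemma vv_mul (i j : ℕ) (hij : i ≤ j) :
    vv p i * vv p j = ((p : ℤ) ^ i) • vv p j := by
  apply ghost_inj
  intro k
  rw [map_mul, map_zsmul, ghost_vv, ghost_vv]
  by_cases h : j ≤ k
  · rw [if_pos h, if_pos (hij.trans h), smul_eq_mul]
  · rw [if_neg h, mul_zero, smul_zero]

lemma fermat (a : ℤ) : (p : ℤ) ∣ a ^ p - a := by
  have h : ((a ^ p - a : ℤ) : ZMod p) = 0 := by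
    push_cast
    rw [ZMod.pow_card]
    ring
  exact (ZMod.intCast_zmod_eq_zero_iff_dvd _ p).mp h

lemma ghost_succ_dvd (w : WittVector p ℤ) (k : ℕ) :
    (p : ℤ) ^ (k + 1) ∣ ghostComponent (k + 1) w - ghostComponent k w := by
  rw [ghost_eq_sum, ghost_eq_sum, sum_range_succ (n := k + 1)]
  have hrw : (∑ i ∈ range (k + 1), (p : ℤ) ^ i * w.coeff i ^ p ^ (k + 1 - i))
        + (p : ℤ) ^ (k + 1) * w.coeff (k + 1) ^ p ^ (k + 1 - (k + 1))
        - ∑ i ∈ range (k + 1), (p : ℤ) ^ i * w.coeff i ^ p ^ (k - i)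
      = (∑ i ∈ range (k + 1),
          ((p : ℤ) ^ i * w.coeff i ^ p ^ (k + 1 - i) - (p : ℤ) ^ i * w.coeff i ^ p ^ (k - i)))
        + (p : ℤ) ^ (k + 1) * w.coeff (k + 1) ^ p ^ (k + 1 - (k + 1)) := by
    rw [Finset.sum_sub_distrib]
    ring
  rw [hrw]
  apply dvd_add
  · apply Finset.dvd_sum
    intro i hi
    have hik : i ≤ k := Nat.lt_succ_iff.mp (mem_range.mp hi)
    rw [← mul_sub]
    have h1 : (p : ℤ) ^ (k - i + 1) ∣
        w.coeff i ^ p ^ (k + 1 - i) - w.coeff i ^ p ^ (k - i) := by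
      have h2 := dvd_sub_pow_of_dvd_sub (fermat p (w.coeff i)) (k - i)
      have h3 : (w.coeff i ^ p) ^ p ^ (k - i) = w.coeff i ^ p ^ (k + 1 - i) := by
        rw [← pow_mul]
        congr 1
        rw [show k + 1 - i = (k - i) + 1 by omega, pow_succ]
        ring
      rwa [h3] at h2
    calc (p : ℤ) ^ (k + 1) = (p : ℤ) ^ i * (p : ℤ) ^ (k - i + 1) := by
          rw [← pow_add]; congr 1; omega
      _ ∣ (p : ℤ) ^ i * (w.coeff i ^ p ^ (k + 1 - i) - w.coeff i ^ p ^ (k - i)) :=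
          mul_dvd_mul_left _ h1
  · exact Dvd.intro _ rfl

/-- the `ℤ`-linear combination `∑_{j<m} c j • V^j(1)`. -/
noncomputable def lc (c : ℕ → ℤ) (m : ℕ) : WittVector p ℤ :=
  ∑ j ∈ range m, c j • vv p j

lemma ghost_lc (c : ℕ → ℤ) (m k : ℕ) (hk : k < m) :
    ghostComponent k (lc p c m) = ∑ j ∈ range (k + 1), c j * (p : ℤ) ^ j := by
  rw [lc, map_sum]
  have h1 : ∀ j ∈ range m, ghostComponent k (c j • vv p j)
      = c j * (if j ≤ k then (p : ℤ) ^ j else 0) := by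
    intro j _
    rw [map_zsmul, ghost_vv, smul_eq_mul]
  rw [Finset.sum_congr rfl h1]
  rw [← Finset.sum_subset (Finset.range_subset_range.mpr hk)]
  · refine Finset.sum_congr rfl fun j hj => ?_
    rw [if_pos (Nat.lt_succ_iff.mp (mem_range.mp hj))]
  · intro j _ hj
    rw [if_neg (fun h => hj (mem_range.mpr (Nat.lt_succ_of_le h))), mul_zero]

lemma c_zero_of_sums (c : ℕ → ℤ) (n : ℕ)
    (h : ∀ k ≤ n, ∑ j ∈ range (k + 1), c j * (p : ℤ) ^ j = 0) :
    ∀ j ≤ n, c j = 0 := by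
  intro j
  induction j using Nat.strong_induction_on with
  | _ j ih =>
    intro hj
    have h1 := h j hj
    rw [sum_range_succ] at h1
    have h2 : ∑ i ∈ range j, c i * (p : ℤ) ^ i = 0 := by
      refine sum_eq_zero fun i hi => ?_
      rw [ih i (mem_range.mp hi) (le_trans (le_of_lt (mem_range.mp hi)) hj), zero_mul]
    rw [h2, zero_add] at h1
    exact (mul_eq_zero.mp h1).resolve_right (pow_ne_zero _ (hp_ne_zero p))

end WittIntAux

open WittIntAux

set_option maxHeartbeats 1600000 in
/-- For every `n ≥ 0`, the `p`-typical Witt ring `W_n(ℤ)` (normalized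
indexing, formalized as `TruncatedWittVector p (n+1)`) is isomorphic to
`ℤ[x_1,…,x_n]/(x_i·x_j − p^i·x_j : 1 ≤ i ≤ j ≤ n)`, where `x_i` corresponds to `V_p^i(1)`.
Here the variable indexed by `i : Fin n` plays the role of `x_{i+1}`. -/
theorem witt_int_presentation (p : ℕ) [Fact p.Prime] (n : ℕ) :
    ∃ e : (MvPolynomial (Fin n) ℤ ⧸ Ideal.span
        { f : MvPolynomial (Fin n) ℤ | ∃ i j : Fin n, i ≤ j ∧
            f = MvPolynomial.X i * MvPolynomial.X j -
              (p : MvPolynomial (Fin n) ℤ) ^ ((i : ℕ) + 1) * MvPolynomial.X j }) ≃+*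
        TruncatedWittVector p (n + 1) ℤ,
      ∀ i : Fin n,
        e (Ideal.Quotient.mk _ (MvPolynomial.X i)) =
          WittVector.truncate (n + 1)
            ((fun x => WittVector.verschiebung x)^[(i : ℕ) + 1] (1 : WittVector p ℤ)) := by
  classical
  set I : Ideal (MvPolynomial (Fin n) ℤ) := Ideal.span
      { f : MvPolynomial (Fin n) ℤ | ∃ i j : Fin n, i ≤ j ∧
          f = MvPolynomial.X i * MvPolynomial.X j -
            (p : MvPolynomial (Fin n) ℤ) ^ ((i : ℕ) + 1) * MvPolynomial.X j } with hI
  -- the target elements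
  set t : Fin n → TruncatedWittVector p (n + 1) ℤ :=
    fun i => WittVector.truncate (n + 1) (vv p ((i : ℕ) + 1)) with ht
  set ψ : MvPolynomial (Fin n) ℤ →+* TruncatedWittVector p (n + 1) ℤ :=
    (MvPolynomial.aeval t).toRingHom with hψ
  have hψX : ∀ i : Fin n, ψ (MvPolynomial.X i) = t i := fun i => by
    simp [hψ]
  -- the key relation in truncated Witt vectors
  have hrel : ∀ i j : Fin n, (i : ℕ) ≤ (j : ℕ) →
      t i * t j = ((p : ℤ) ^ ((i : ℕ) + 1)) • t j := by
    intro i j hij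
    have h1 := vv_mul p ((i : ℕ) + 1) ((j : ℕ) + 1) (by omega)
    calc t i * t j = WittVector.truncate (n + 1) (vv p ((i : ℕ) + 1) * vv p ((j : ℕ) + 1)) := by
          rw [map_mul]
      _ = WittVector.truncate (n + 1) (((p : ℤ) ^ ((i : ℕ) + 1)) • vv p ((j : ℕ) + 1)) := by
          rw [h1]
      _ = ((p : ℤ) ^ ((i : ℕ) + 1)) • t j := by rw [map_zsmul]
  -- ψ kills the ideal
  have hker : ∀ a ∈ I, ψ a = 0 := by
    intro a ha
    rw [hI] at ha
    refine Submodule.span_induction ?_ ?_ ?_ ?_ ha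
    · rintro f ⟨i, j, hij, rfl⟩
      have hijn : (i : ℕ) ≤ (j : ℕ) := hij
      rw [map_sub, map_mul, map_mul, map_pow, map_natCast, hψX, hψX, hrel i j hijn]
      rw [zsmul_eq_mul, sub_eq_zero]
      push_cast
      ring
    · simp
    · intro f g _ _ hf hg
      rw [map_add, hf, hg, add_zero]
    · intro f g _ hg
      rw [smul_eq_mul, map_mul, hg, mul_zero]
  set ψb : (MvPolynomial (Fin n) ℤ ⧸ I) →+* TruncatedWittVector p (n + 1) ℤ :=
    Ideal.Quotient.lift I ψ hker with hψb
  have hψbmk : ∀ f, ψb (Ideal.Quotient.mk I f) = ψ f := fun f => Ideal.Quotient.lift_mk I ψ hker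
  -- generators of the quotient
  set x : Fin n → (MvPolynomial (Fin n) ℤ ⧸ I) :=
    fun i => Ideal.Quotient.mk I (MvPolynomial.X i) with hx
  set y : Fin (n + 1) → (MvPolynomial (Fin n) ℤ ⧸ I) := Fin.cons 1 x with hy
  set M : Submodule ℤ (MvPolynomial (Fin n) ℤ ⧸ I) := Submodule.span ℤ (Set.range y) with hM
  have hy0 : y 0 = 1 := rfl
  have hys : ∀ i : Fin n, y i.succ = x i := fun i => Fin.cons_succ _ _ _
  have hmem1 : (1 : MvPolynomial (Fin n) ℤ ⧸ I) ∈ M :=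
    Submodule.subset_span ⟨0, hy0⟩
  have hmemx : ∀ i : Fin n, x i ∈ M := fun i =>
    Submodule.subset_span ⟨i.succ, hys i⟩
  -- relation in the quotient
  have hxrel : ∀ i j : Fin n, (i : ℕ) ≤ (j : ℕ) →
      x i * x j = ((p : ℤ) ^ ((i : ℕ) + 1)) • x j := by
    intro i j hij
    have hgen : (MvPolynomial.X i * MvPolynomial.X j -
        (p : MvPolynomial (Fin n) ℤ) ^ ((i : ℕ) + 1) * MvPolynomial.X j) ∈ I := by
      rw [hI]
      exact Ideal.subset_span ⟨i, j, hij, rfl⟩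
    have h0 : Ideal.Quotient.mk I (MvPolynomial.X i * MvPolynomial.X j -
        (p : MvPolynomial (Fin n) ℤ) ^ ((i : ℕ) + 1) * MvPolynomial.X j) = 0 :=
      (Ideal.Quotient.eq_zero_iff_mem).mpr hgen
    rw [map_sub, map_mul, map_mul, map_pow, map_natCast, sub_eq_zero] at h0
    rw [hx]
    rw [h0, zsmul_eq_mul]
    push_cast
    ring
  -- M is closed under multiplication
  have hmul : ∀ a ∈ M, ∀ b ∈ M, a * b ∈ M := by
    have hMM : M * M ≤ M := by
      rw [hM, Submodule.span_mul_span]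
      refine Submodule.span_le.mpr ?_
      rintro z hz
      rw [Set.mem_mul] at hz
      obtain ⟨a, ha, b, hb, rfl⟩ := hz
      obtain ⟨ia, rfl⟩ := ha
      obtain ⟨ib, rfl⟩ := hb
      rcases Fin.eq_zero_or_eq_succ ia with h | ⟨ia', rfl⟩
      · subst h
        rw [hy0, one_mul]
        exact Submodule.subset_span ⟨ib, rfl⟩
      rcases Fin.eq_zero_or_eq_succ ib with h | ⟨ib', rfl⟩
      · subst h
        rw [hy0, mul_one]
        exact Submodule.subset_span ⟨ia'.succ, rfl⟩
      rw [hys, hys]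
      rcases le_total (ia' : ℕ) (ib' : ℕ) with h | h
      · rw [hxrel ia' ib' h]
        exact Submodule.smul_mem _ _ (hmemx ib')
      · rw [mul_comm, hxrel ib' ia' h]
        exact Submodule.smul_mem _ _ (hmemx ia')
    intro a ha b hb
    exact hMM (Submodule.mul_mem_mul ha hb)
  -- every element of the quotient lies in M
  have hMtop : ∀ q : MvPolynomial (Fin n) ℤ ⧸ I, q ∈ M := by
    intro q
    obtain ⟨f, rfl⟩ := Ideal.Quotient.mk_surjective q
    induction f using MvPolynomial.induction_on with
    | C a =>
      have : (Ideal.Quotient.mk I) (MvPolynomial.C a) = a • 1 := by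
        rw [show (MvPolynomial.C a : MvPolynomial (Fin n) ℤ) = (a : MvPolynomial (Fin n) ℤ) by
            simp, map_intCast, zsmul_eq_mul, mul_one]
      rw [this]
      exact Submodule.smul_mem _ _ hmem1
    | add f g hf hg =>
      rw [map_add]
      exact M.add_mem hf hg
    | mul_X f i hf =>
      rw [map_mul]
      exact hmul _ hf _ (hmemx i)
  -- ψb on the generators y
  have hψby : ∀ i : Fin (n + 1), ψb (y i) = WittVector.truncate (n + 1) (vv p (i : ℕ)) := by
    intro i
    rcases Fin.eq_zero_or_eq_succ i with h | ⟨i', rfl⟩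
    · subst h
      rw [hy0, map_one]
      have : vv p ((0 : Fin (n + 1)) : ℕ) = 1 := rfl
      rw [this, map_one]
    · rw [hys, hx, hψbmk, hψX, ht]
      rfl
  -- injectivity
  have hinj : Function.Injective ψb := by
    rw [injective_iff_map_eq_zero]
    intro q hq
    obtain ⟨c, hc⟩ := (Submodule.mem_span_range_iff_exists_fun ℤ).mp (hMtop q)
    set c' : ℕ → ℤ := fun j => if h : j < n + 1 then c ⟨j, h⟩ else 0 with hc'
    have hcc : ∀ i : Fin (n + 1), c' (i : ℕ) = c i := by
      intro i
      rw [hc']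
      simp [i.is_lt]
    have hsum : ψb q = WittVector.truncate (n + 1) (lc p c' (n + 1)) := by
      rw [← hc, map_sum]
      have h1 : ∀ i : Fin (n + 1), ψb (c i • y i)
          = c' (i : ℕ) • WittVector.truncate (n + 1) (vv p (i : ℕ)) := by
        intro i
        rw [map_zsmul, hψby, hcc]
      rw [Finset.sum_congr rfl fun i _ => h1 i]
      rw [lc, map_sum]
      simp_rw [map_zsmul]
      exact Fin.sum_univ_eq_sum_range
        (fun j => c' j • WittVector.truncate (n + 1) (vv p j)) (n + 1)
    rw [hsum] at hq
    -- coefficients of lc vanish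
    have hcoeff : ∀ k ≤ n, (lc p c' (n + 1)).coeff k = 0 := by
      intro k hk
      have h2 : (WittVector.truncate (n + 1) (lc p c' (n + 1))).coeff
          ⟨k, Nat.lt_succ_of_le hk⟩ = (lc p c' (n + 1)).coeff k :=
        WittVector.coeff_truncate _ _
      rw [hq] at h2
      rw [← h2]
      exact TruncatedWittVector.coeff_zero (p := p) _ _ _
    have hghost : ∀ m ≤ n, ghostComponent m (lc p c' (n + 1)) = 0 := by
      intro m hm
      rw [ghost_eq_sum]
      refine Finset.sum_eq_zero fun i hi => ?_
      have hin : i ≤ n := le_trans (Nat.lt_succ_iff.mp (mem_range.mp hi)) hm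
      rw [hcoeff i hin, zero_pow (pow_ne_zero _ (hp_pos p).ne'), mul_zero]
    have hsums : ∀ k ≤ n, ∑ j ∈ range (k + 1), c' j * (p : ℤ) ^ j = 0 := by
      intro k hk
      rw [← ghost_lc p c' (n + 1) k (Nat.lt_succ_of_le hk)]
      exact hghost k hk
    have hc0 : ∀ j ≤ n, c' j = 0 := c_zero_of_sums p c' n hsums
    have hcall : ∀ i : Fin (n + 1), c i = 0 := by
      intro i
      rw [← hcc]
      exact hc0 _ (Nat.lt_succ_iff.mp i.is_lt)
    rw [← hc]
    refine Finset.sum_eq_zero fun i _ => ?_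
    rw [hcall i, zero_smul]
  -- surjectivity
  have hsurj : Function.Surjective ψb := by
    intro tt
    obtain ⟨w, rfl⟩ := WittVector.truncate_surjective p (n + 1) ℤ tt
    -- define coefficients via ghost components
    set c : ℕ → ℤ := fun k => Nat.rec (ghostComponent 0 w)
      (fun k _ => (ghostComponent (k + 1) w - ghostComponent k w) / (p : ℤ) ^ (k + 1)) k with hcdef
    have hc0 : c 0 = ghostComponent 0 w := rfl
    have hcs : ∀ k, c (k + 1)
        = (ghostComponent (k + 1) w - ghostComponent k w) / (p : ℤ) ^ (k + 1) := fun k => rfl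
    have hsum : ∀ k, ∑ j ∈ range (k + 1), c j * (p : ℤ) ^ j = ghostComponent k w := by
      intro k
      induction k with
      | zero => simp [hc0]
      | succ k ih =>
        rw [sum_range_succ, ih, hcs]
        rw [Int.ediv_mul_cancel (ghost_succ_dvd p w k)]
        ring
    have hghost : ∀ m ≤ n, ghostComponent m (lc p c (n + 1)) = ghostComponent m w := by
      intro m hm
      rw [ghost_lc p c (n + 1) m (Nat.lt_succ_of_le hm), hsum]
    have htr : WittVector.truncate (n + 1) (lc p c (n + 1)) = WittVector.truncate (n + 1) w := by
      apply TruncatedWittVector.ext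
      intro i
      rw [WittVector.coeff_truncate, WittVector.coeff_truncate]
      exact coeff_eq_of_ghost p _ _ n hghost i (Nat.lt_succ_iff.mp i.is_lt)
    -- the preimage
    have hmemrange : WittVector.truncate (n + 1) (lc p c (n + 1)) ∈ RingHom.range ψb := by
      rw [lc, map_sum]
      refine Subring.sum_mem _ fun j hj => ?_
      rw [map_zsmul]
      refine zsmul_mem ?_ _
      match j, hj with
      | 0, _ =>
        have : WittVector.truncate (n + 1) (vv p 0) = 1 := by
          have h1 : vv p 0 = 1 := rfl
          rw [h1, map_one]
        rw [this]
        exact one_mem _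
      | (m + 1), hj =>
        have hm : m < n := by
          have := mem_range.mp hj
          omega
        refine ⟨Ideal.Quotient.mk I (MvPolynomial.X ⟨m, hm⟩), ?_⟩
        rw [hψbmk, hψX, ht]
    obtain ⟨q, hqeq⟩ := hmemrange
    exact ⟨q, by rw [hqeq, htr]⟩
  refine ⟨RingEquiv.ofBijective ψb ⟨hinj, hsurj⟩, ?_⟩
  intro i
  show ψb (Ideal.Quotient.mk I (MvPolynomial.X i)) = _
  rw [hψbmk, hψX, ht]
  rfl
end

section
/- The mod-p fiber ℤ/p ⊗ W_n(ℤ) is isomorphic to 𝔽_p[x_1,…,x_n]/(x_i·x_j : 1 ≤ i ≤ j ≤ n); consequently for n ≥ 2 the socle of this local ring has dimension n > 1, so W_n(ℤ) is not Gorenstein at the prime containing p for n ≥ 2. -/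
open scoped TensorProduct

/-- The ring `𝔽_p[x_1,…,x_n]/(x_i·x_j : 1 ≤ i ≤ j ≤ n)`; the variable indexed by `i : Fin n`
plays the role of `x_{i+1}`. -/
def socleModelRing (p n : ℕ) : Type :=
  MvPolynomial (Fin n) (ZMod p) ⧸ Ideal.span
    { f : MvPolynomial (Fin n) (ZMod p) | ∃ i j : Fin n, i ≤ j ∧
        f = MvPolynomial.X i * MvPolynomial.X j }

noncomputable instance (p n : ℕ) : CommRing (socleModelRing p n) :=
  inferInstanceAs (CommRing (MvPolynomial (Fin n) (ZMod p) ⧸ Ideal.span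
    { f : MvPolynomial (Fin n) (ZMod p) | ∃ i j : Fin n, i ≤ j ∧
        f = MvPolynomial.X i * MvPolynomial.X j }))

noncomputable instance (p n : ℕ) : Algebra (ZMod p) (socleModelRing p n) :=
  inferInstanceAs (Algebra (ZMod p) (MvPolynomial (Fin n) (ZMod p) ⧸ Ideal.span
    { f : MvPolynomial (Fin n) (ZMod p) | ∃ i j : Fin n, i ≤ j ∧
        f = MvPolynomial.X i * MvPolynomial.X j }))

/-- The images of the variables `x_1, …, x_n` in `socleModelRing p n`. -/
noncomputable def socleModelVar (p n : ℕ) (i : Fin n) : socleModelRing p n :=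
  Ideal.Quotient.mk _ (MvPolynomial.X i)

/-! Additively, `W_{n+1}(ℤ)` is free over `ℤ` on `1, V(1), …, Vⁿ(1)`: these span modulo `V^{n+1}`
because every Witt vector over `ℤ` is `x₀ + V y`, and they are independent because the ghost
components of `Vᵏ(1)` are `(0, …, 0, pᵏ, pᵏ, …)`, a triangular system. Since `Vx · Vy = p V(xy)`,
the images of `V(1), …, Vⁿ(1)` in `𝔽_p ⊗ W_{n+1}(ℤ)` multiply to zero, so the fiber is the trivial
square-zero extension `𝔽_p ⊕ 𝔽_pⁿ`, and so is the model ring. In a ring whose maximal ideal `m`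
satisfies `m² = 0 ≠ m`, the socle is `m` itself, here of dimension `n`. -/

open Module TrivSqZeroExt

theorem IsLocalRing.of_isMaximal_of_le_nilradical {R : Type*} [CommRing R] {J : Ideal R}
    (hJ : J.IsMaximal) (hle : J ≤ nilradical R) : IsLocalRing R :=
  of_unique_max_ideal ⟨J, hJ, fun I hI =>
    (hJ.eq_of_le hI.ne_top (hle.trans (nilradical_le_prime I))).symm⟩

theorem Ideal.le_nilradical_of_mul_self_eq_bot {R : Type*} [CommRing R] {J : Ideal R}
    (hsq : J * J = ⊥) : J ≤ nilradical R := fun x hx =>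
  ⟨2, by rw [pow_two]; exact Ideal.mem_bot.mp (hsq ▸ Ideal.mul_mem_mul hx hx)⟩

theorem Ideal.colon_bot_eq_self_of_isMaximal {R : Type*} [CommRing R] {J : Ideal R}
    (hJ : J.IsMaximal) (hsq : J * J = ⊥) (hne : J ≠ ⊥) : Submodule.colon ⊥ (J : Set R) = J := by
  refine (hJ.eq_of_le (fun htop => hne ?_) fun x hx => ?_).symm
  · refine eq_bot_iff.mpr fun y hy => ?_
    have hy1 : (1 : R) • y ∈ (⊥ : Ideal R) :=
      Submodule.mem_colon.mp (by rw [htop]; exact Submodule.mem_top) y hy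
    rwa [one_smul] at hy1
  · exact Submodule.mem_colon.mpr fun y hy => hsq ▸ Ideal.mul_mem_mul hx hy

namespace Module.Basis

variable {R A : Type*} [CommRing R] [CommRing A] [Algebra R A] {n : ℕ}
  (b : Basis (Fin (n + 1)) R A) (hmul : ∀ i j : Fin n, b i.succ * b j.succ = 0)

noncomputable def trivSqZeroExtHom : TrivSqZeroExt R (Fin n → R) →ₐ[R] A :=
  liftEquivOfComm ⟨Fintype.linearCombination R (fun i => b i.succ), fun v w => by
    simp only [Fintype.linearCombination_apply, Finset.sum_mul_sum, smul_mul_smul_comm, hmul,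
      smul_zero, Finset.sum_const_zero]⟩

theorem trivSqZeroExtHom_apply (h0 : b 0 = 1) (x : TrivSqZeroExt R (Fin n → R)) :
    b.trivSqZeroExtHom hmul x = b.equivFun.symm (Fin.consEquiv (fun _ => R) x) := by
  simp only [trivSqZeroExtHom, liftEquivOfComm_apply, lift_def, Algebra.ofId_apply,
    Algebra.algebraMap_eq_smul_one, Fintype.linearCombination_apply, equivFun_symm_apply,
    Fin.sum_univ_succ, h0]
  rfl

noncomputable def trivSqZeroExtEquiv (h0 : b 0 = 1) : TrivSqZeroExt R (Fin n → R) ≃ₐ[R] A :=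
  AlgEquiv.ofBijective (b.trivSqZeroExtHom hmul) <| by
    rw [funext (b.trivSqZeroExtHom_apply hmul h0)]
    exact b.equivFun.symm.bijective.comp (Fin.consEquiv _).bijective

end Module.Basis

namespace socleModelRing

variable (p n : ℕ)

theorem var_mul_var (i j : Fin n) : socleModelVar p n i * socleModelVar p n j = 0 := by
  wlog hij : i ≤ j generalizing i j
  · rw [mul_comm]; exact this j i (le_of_not_ge hij)
  exact Ideal.Quotient.eq_zero_iff_mem.mpr (Ideal.subset_span ⟨i, j, hij, rfl⟩)

noncomputable def toTrivSqZeroExt :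
    socleModelRing p n →ₐ[ZMod p] TrivSqZeroExt (ZMod p) (Fin n → ZMod p) :=
  Ideal.Quotient.liftₐ _ (MvPolynomial.aeval fun i => inr (Pi.single i 1)) fun _ ha => by
    refine (Ideal.span_le (I := RingHom.ker _)).mpr ?_ ha
    rintro _ ⟨i, j, -, rfl⟩
    simp only [SetLike.mem_coe, RingHom.mem_ker, map_mul, MvPolynomial.aeval_X, inr_mul_inr]

noncomputable def ofTrivSqZeroExt :
    TrivSqZeroExt (ZMod p) (Fin n → ZMod p) →ₐ[ZMod p] socleModelRing p n :=
  liftEquivOfComm ⟨Fintype.linearCombination (ZMod p) (socleModelVar p n), fun v w => by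
    simp only [Fintype.linearCombination_apply, Finset.sum_mul_sum, smul_mul_smul_comm,
      var_mul_var, smul_zero, Finset.sum_const_zero]⟩

theorem toTrivSqZeroExt_var (i : Fin n) :
    toTrivSqZeroExt p n (socleModelVar p n i) = inr (Pi.single i 1) :=
  MvPolynomial.aeval_X _ i

theorem ofTrivSqZeroExt_inr (v : Fin n → ZMod p) :
    ofTrivSqZeroExt p n (inr v) = ∑ i, v i • socleModelVar p n i := by
  simp [ofTrivSqZeroExt, Fintype.linearCombination_apply]

noncomputable def equivTrivSqZeroExt :
    socleModelRing p n ≃ₐ[ZMod p] TrivSqZeroExt (ZMod p) (Fin n → ZMod p) :=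
  AlgEquiv.ofAlgHom (toTrivSqZeroExt p n) (ofTrivSqZeroExt p n)
    (algHom_ext fun v => by
      simp only [AlgHom.comp_apply, ofTrivSqZeroExt_inr, map_sum, map_smul, toTrivSqZeroExt_var,
        AlgHom.id_apply, ← inr_smul, ← inr_sum]
      congr 1
      ext j
      simp [Finset.sum_apply, Pi.single_apply])
    -- `socleModelRing` is not reducible, so the quotient's ext lemma needs `f` and `g` spelled out
    (Ideal.Quotient.algHom_ext (ZMod p) (S := socleModelRing p n)
      (f := ((ofTrivSqZeroExt p n).comp (toTrivSqZeroExt p n) :))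
      (g := AlgHom.id (ZMod p) (socleModelRing p n)) <| MvPolynomial.algHom_ext fun i => by
      show ofTrivSqZeroExt p n (toTrivSqZeroExt p n (socleModelVar p n i)) = socleModelVar p n i
      simp [toTrivSqZeroExt_var, ofTrivSqZeroExt_inr, Pi.single_apply])

theorem equivTrivSqZeroExt_var (i : Fin n) :
    equivTrivSqZeroExt p n (socleModelVar p n i) = inr (Pi.single i 1) :=
  toTrivSqZeroExt_var p n i

theorem equivTrivSqZeroExt_symm_inr (v : Fin n → ZMod p) :
    (equivTrivSqZeroExt p n).symm (inr v) = ∑ i, v i • socleModelVar p n i :=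
  ofTrivSqZeroExt_inr p n v

local notation "J" => Ideal.span (Set.range (socleModelVar p n))

noncomputable def augmentation : socleModelRing p n →ₐ[ZMod p] ZMod p :=
  (fstHom (ZMod p) (ZMod p) (Fin n → ZMod p)).comp (equivTrivSqZeroExt p n).toAlgHom

theorem sum_smul_var_mem_span (v : Fin n → ZMod p) : ∑ i, v i • socleModelVar p n i ∈ J :=
  Ideal.sum_mem _ fun i _ =>
    Submodule.smul_of_tower_mem _ _ (Ideal.subset_span (Set.mem_range_self i))

theorem inr_snd_equivTrivSqZeroExt {x : socleModelRing p n}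
    (hx : x ∈ RingHom.ker (augmentation p n)) :
    inr (equivTrivSqZeroExt p n x).snd = equivTrivSqZeroExt p n x := by
  rw [← inl_fst_add_inr_snd_eq (equivTrivSqZeroExt p n x), snd_add, snd_inl, zero_add, snd_inr,
    show (equivTrivSqZeroExt p n x).fst = 0 from hx, inl_zero, zero_add]

theorem span_var_eq_ker : J = RingHom.ker (augmentation p n) := by
  refine le_antisymm (Ideal.span_le.mpr ?_) fun x hx => ?_
  · rintro _ ⟨i, rfl⟩
    show (equivTrivSqZeroExt p n (socleModelVar p n i)).fst = 0
    rw [equivTrivSqZeroExt_var, fst_inr]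
  · rw [← (equivTrivSqZeroExt p n).symm_apply_apply x, ← inr_snd_equivTrivSqZeroExt p n hx,
      equivTrivSqZeroExt_symm_inr]
    exact sum_smul_var_mem_span p n _

theorem span_var_mul_self : J * J = ⊥ := by
  rw [Ideal.span_mul_span', Ideal.span_eq_bot]
  intro x hx
  obtain ⟨_, ⟨i, rfl⟩, _, ⟨j, rfl⟩, rfl⟩ := Set.mem_mul.mp hx
  exact var_mul_var p n i j

theorem isMaximal_span_var [Fact p.Prime] : (J).IsMaximal := by
  rw [span_var_eq_ker]
  exact RingHom.ker_isMaximal_of_surjective _ fun r =>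
    ⟨algebraMap (ZMod p) (socleModelRing p n) r, (augmentation p n).commutes r⟩

theorem span_var_ne_bot [Fact p.Prime] (hn : 0 < n) : J ≠ ⊥ := fun h => by
  have hx : socleModelVar p n ⟨0, hn⟩ = 0 := by
    rw [← Ideal.mem_bot, ← h]; exact Ideal.subset_span (Set.mem_range_self _)
  have := congrArg (fun x => (equivTrivSqZeroExt p n x).snd ⟨0, hn⟩) hx
  simp [equivTrivSqZeroExt_var] at this

noncomputable def spanVarEquiv : J ≃ₗ[ZMod p] (Fin n → ZMod p) where
  toFun x := (equivTrivSqZeroExt p n x).snd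
  map_add' x y := by simp
  map_smul' c x := by simp
  invFun v := ⟨(equivTrivSqZeroExt p n).symm (inr v),
    equivTrivSqZeroExt_symm_inr p n v ▸ sum_smul_var_mem_span p n v⟩
  left_inv x := Subtype.ext <| by
    show (equivTrivSqZeroExt p n).symm (inr (equivTrivSqZeroExt p n x).snd) = x
    rw [inr_snd_equivTrivSqZeroExt p n (span_var_eq_ker p n ▸ x.2), AlgEquiv.symm_apply_apply]
  right_inv v := by simp

theorem isLocalRing [Fact p.Prime] : IsLocalRing (socleModelRing p n) :=
  IsLocalRing.of_isMaximal_of_le_nilradical (isMaximal_span_var p n)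
    (Ideal.le_nilradical_of_mul_self_eq_bot (span_var_mul_self p n))

end socleModelRing

namespace WittVector

variable (p : ℕ) [hp : Fact p.Prime]

theorem ghostComponent_iterate_verschiebung {R : Type*} [CommRing R] (x : WittVector p R)
    (k j : ℕ) : ghostComponent j (verschiebung^[k] x) =
      if k ≤ j then (p : R) ^ k * ghostComponent (j - k) x else 0 := by
  induction k generalizing j with
  | zero => simp
  | succ k ih =>
    rw [Function.iterate_succ_apply']
    rcases j with _ | j
    · rw [ghostComponent_zero_verschiebung, if_neg (by omega)]
    · rw [ghostComponent_verschiebung, ih]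
      split_ifs <;> first | omega | simp [pow_succ', mul_assoc, Nat.add_sub_add_right]

theorem verschiebung_mul_verschiebung {R : Type*} [CommRing R] (x y : WittVector p R) :
    verschiebung x * verschiebung y = p • verschiebung (x * y) := by
  rw [← verschiebung_mul_frobenius, frobenius_verschiebung, ← map_nsmul, nsmul_eq_mul,
    mul_left_comm, mul_comm]
  congr 1
  ring

theorem exists_eq_zsmul_one_add_verschiebung (x : WittVector p ℤ) :
    ∃ y, x = x.coeff 0 • 1 + verschiebung y := by
  have hcoeff : (x - x.coeff 0 • 1).coeff 0 = 0 := by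
    change constantCoeff (x - x.coeff 0 • 1) = 0
    rw [map_sub, map_zsmul, map_one, constantCoeff_apply, smul_eq_mul, mul_one, sub_self]
  exact ⟨_, eq_add_of_sub_eq' (eq_iterate_verschiebung (n := 1) (by simpa using hcoeff))⟩

theorem exists_eq_sum_iterate_verschiebung_one_add (x : WittVector p ℤ) (N : ℕ) :
    ∃ (c : Fin N → ℤ) (z : WittVector p ℤ),
      x = ∑ k, c k • verschiebung^[k] 1 + verschiebung^[N] z := by
  induction N generalizing x with
  | zero => exact ⟨0, x, by simp⟩
  | succ N ih =>
    obtain ⟨y, hy⟩ := exists_eq_zsmul_one_add_verschiebung p x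
    obtain ⟨c, z, rfl⟩ := ih y
    refine ⟨Fin.cons (x.coeff 0) c, z, hy.trans ?_⟩
    rw [Fin.sum_univ_succ, map_add, map_sum, add_assoc]
    simp only [map_zsmul, Fin.cons_zero, Fin.cons_succ, Fin.val_zero, Fin.val_succ,
      Function.iterate_zero_apply, Function.iterate_succ_apply']

theorem truncate_iterate_verschiebung (N : ℕ) {R : Type*} [CommRing R] (z : WittVector p R) :
    truncate N (verschiebung^[N] z) = 0 :=
  (mem_ker_truncate N _).mpr fun _ hi => iterate_verschiebung_coeff_eq_zero z hi

theorem ghostComponent_eq_zero_of_truncate_eq_zero {R : Type*} [CommRing R] {N : ℕ}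
    {x : WittVector p R} (hx : truncate N x = 0) {j : ℕ} (hj : j < N) :
    ghostComponent j x = 0 := by
  rw [eq_iterate_verschiebung ((mem_ker_truncate N x).mp hx), ghostComponent_iterate_verschiebung,
    if_neg (by omega)]

theorem linearIndependent_truncate_iterate_verschiebung_one (N : ℕ) :
    LinearIndependent ℤ fun k : Fin N => truncate N (verschiebung^[k] (1 : WittVector p ℤ)) := by
  refine Fintype.linearIndependent_iff.mpr fun c hc i => ?_
  simp only [← map_zsmul, ← map_sum] at hc
  have hghost (j : Fin N) : ∑ k : Fin N, c k * (if k ≤ j then (p : ℤ) ^ (k : ℕ) else 0) = 0 := by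
    have := ghostComponent_eq_zero_of_truncate_eq_zero p hc j.2
    simpa only [map_sum, map_zsmul, ghostComponent_iterate_verschiebung, map_one, mul_one,
      smul_eq_mul, Fin.le_def] using this
  induction i using WellFoundedLT.induction with
  | _ i ih =>
    have := hghost i
    rw [Finset.sum_eq_single i (fun k _ hk => ?_) (by simp), if_pos le_rfl] at this
    · exact (mul_eq_zero.mp this).resolve_right
        (pow_ne_zero _ (by exact_mod_cast hp.out.ne_zero))
    · rcases lt_or_gt_of_ne hk with hlt | hgt
      · rw [ih k hlt, zero_mul]
      · rw [if_neg (not_le.mpr hgt), mul_zero]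

noncomputable def truncatedBasis (N : ℕ) : Basis (Fin N) ℤ (TruncatedWittVector p N ℤ) :=
  Basis.mk (linearIndependent_truncate_iterate_verschiebung_one p N) fun a _ => by
    obtain ⟨x, rfl⟩ := truncate_surjective p N ℤ a
    obtain ⟨c, z, rfl⟩ := exists_eq_sum_iterate_verschiebung_one_add p x N
    rw [map_add, truncate_iterate_verschiebung, add_zero, map_sum]
    exact (Submodule.mem_span_range_iff_exists_fun ℤ).mpr ⟨c, by simp only [map_zsmul]⟩

theorem truncatedBasis_apply (N : ℕ) (k : Fin N) :
    truncatedBasis p N k = truncate N (verschiebung^[k] (1 : WittVector p ℤ)) :=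
  Basis.mk_apply _ _ _

theorem truncatedBasis_succ_mul_succ {n : ℕ} (i j : Fin n) :
    truncatedBasis p (n + 1) i.succ * truncatedBasis p (n + 1) j.succ =
      p • truncate (n + 1)
        (verschiebung (verschiebung^[i] 1 * verschiebung^[j] (1 : WittVector p ℤ))) := by
  simp only [truncatedBasis_apply, Fin.val_succ, Function.iterate_succ_apply', ← map_mul,
    verschiebung_mul_verschiebung, map_nsmul]

end WittVector

open WittVector in
noncomputable def modPFiberEquivTrivSqZeroExt (p n : ℕ) [Fact p.Prime] :
    TrivSqZeroExt (ZMod p) (Fin n → ZMod p) ≃ₐ[ZMod p]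
      ZMod p ⊗[ℤ] TruncatedWittVector p (n + 1) ℤ :=
  (Algebra.TensorProduct.basis (ZMod p) (truncatedBasis p (n + 1))).trivSqZeroExtEquiv
    (fun i j => by
      rw [Algebra.TensorProduct.basis_apply, Algebra.TensorProduct.basis_apply,
        Algebra.TensorProduct.tmul_mul_tmul, one_mul, truncatedBasis_succ_mul_succ,
        TensorProduct.tmul_smul, ← Nat.cast_smul_eq_nsmul (ZMod p), ZMod.natCast_self, zero_smul])
    (by rw [Algebra.TensorProduct.basis_apply, truncatedBasis_apply]; rfl)

/-- The mod-`p` fiber `ℤ/p ⊗ W_n(ℤ)` is isomorphic to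
`𝔽_p[x_1,…,x_n]/(x_i·x_j : 1 ≤ i ≤ j ≤ n)`; consequently, for `n ≥ 2` the socle of this local
ring (the annihilator of its maximal ideal) has dimension `n > 1` over `𝔽_p`.
(With normalized indexing, `W_n = TruncatedWittVector p (n+1)`.) -/
theorem mod_p_fiber_of_witt_int_and_socle (p : ℕ) [Fact p.Prime] (n : ℕ) :
    Nonempty ((ZMod p) ⊗[ℤ] TruncatedWittVector p (n + 1) ℤ ≃+* socleModelRing p n) ∧
    (∃ h : IsLocalRing (socleModelRing p n),
      @IsLocalRing.maximalIdeal (socleModelRing p n) _ h =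
        Ideal.span (Set.range (socleModelVar p n))) ∧
    (2 ≤ n →
      Module.rank (ZMod p)
        ↥(Submodule.colon (⊥ : Submodule (socleModelRing p n) (socleModelRing p n))
            (Ideal.span (Set.range (socleModelVar p n)))) = n ∧ 1 < n) := by
  have hmax := socleModelRing.isMaximal_span_var p n
  have hlocal := socleModelRing.isLocalRing p n
  refine ⟨⟨(modPFiberEquivTrivSqZeroExt p n).symm.toRingEquiv.trans
      (socleModelRing.equivTrivSqZeroExt p n).symm.toRingEquiv⟩,
    ⟨hlocal, (IsLocalRing.eq_maximalIdeal hmax).symm⟩, fun hn => ⟨?_, by omega⟩⟩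
  rw [Ideal.colon_bot_eq_self_of_isMaximal hmax (socleModelRing.span_var_mul_self p n)
      (socleModelRing.span_var_ne_bot p n (by omega)),
    (socleModelRing.spanVarEquiv p n).rank_eq, rank_fin_fun]
end

section
/- For the p-typical Witt vectors, the total ghost map gh_{≤n} : W_n(A) → A^{n+1} is integral, and its kernel I satisfies I^{2^n} = 0. -/
/-!
Integrality: `Pi.single i a` is a root of `X ^ (p ^ i + 1) - [a] X`, since the `i`-th ghost
component of the Teichmüller lift `[a]` is `a ^ p ^ i`; these elements generate `A ^ (n + 1)`
additively.

Nilpotence: if the first `m` Witt coordinates of `x` vanish, then `x = V^m x'` and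
`(x * y)_m = x_m * gh_m(y)`. Hence squaring an ideal of `W(A)` killed by `gh_0, …, gh_n` kills
one more Witt coordinate, so its `2 ^ n`-th power lies in the kernel of truncation.
-/

open Polynomial

namespace RingHom

variable {R S ι : Type*} [CommRing R] [CommRing S] [DecidableEq ι]

theorem isIntegralElem_single_of_apply_eq_pow (f : R →+* (ι → S)) {i : ι} {a : S} {t : R}
    {N : ℕ} (hN : 0 < N) (ht : f t i = a ^ N) : f.IsIntegralElem (Pi.single i a) := by
  refine ⟨X ^ (N + 1) - C t * X, monic_X_pow_sub ?_, ?_⟩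
  · exact (degree_C_mul_X_le t).trans_lt (by exact_mod_cast Nat.lt_add_of_pos_left hN)
  · simp only [eval₂_sub, eval₂_pow, eval₂_X, eval₂_mul, eval₂_C]
    funext j
    rcases eq_or_ne j i with rfl | hj
    · simp [ht, pow_succ]
    · simp [Pi.single_eq_of_ne hj]

theorem isIntegral_of_forall_isIntegralElem_single [Fintype ι] (f : R →+* (ι → S))
    (h : ∀ i a, f.IsIntegralElem (Pi.single i a)) : f.IsIntegral := by
  let := f.toAlgebra
  intro x
  rw [← Finset.univ_sum_single x]
  exact IsIntegral.sum _ fun i _ => h i (x i)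

end RingHom

namespace WittVector

variable {p : ℕ} [Fact p.Prime] {R : Type*} [CommRing R]

theorem ghostComponent_zero_apply (x : WittVector p R) : ghostComponent 0 x = x.coeff 0 := by
  simp [ghostComponent_apply, wittPolynomial_zero]

theorem ghostComponent_zero_iterate_frobenius (k : ℕ) (x : WittVector p R) :
    ghostComponent 0 (frobenius^[k] x) = ghostComponent k x := by
  induction k generalizing x with
  | zero => rfl
  | succ k ih => rw [Function.iterate_succ_apply, ih, ghostComponent_frobenius]

theorem coeff_mul_of_coeff_eq_zero_of_lt {x : WittVector p R} {m : ℕ} (hx : ∀ i < m, x.coeff i = 0)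
    (y : WittVector p R) : (x * y).coeff m = x.coeff m * ghostComponent m y := by
  calc (x * y).coeff m
      = (verschiebung^[m] (x.shift m * frobenius^[m] y)).coeff (0 + m) := by
        rw [← iterate_verschiebung_mul_left, ← eq_iterate_verschiebung hx, zero_add]
    _ = (x.shift m).coeff 0 * (frobenius^[m] y).coeff 0 := by
        rw [iterate_verschiebung_coeff, mul_coeff_zero]
    _ = x.coeff m * ghostComponent m y := by
        rw [← ghostComponent_zero_apply (frobenius^[m] y), ghostComponent_zero_iterate_frobenius,
          shift_coeff, add_zero]

theorem ker_truncate_mul_ker_ghostComponent_le (m : ℕ) :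
    RingHom.ker (truncate (p := p) (R := R) m) * RingHom.ker (ghostComponent m) ≤
      RingHom.ker (truncate (m + 1)) := by
  refine Ideal.mul_le.mpr fun x hx y hy => ?_
  have hxy : x * y ∈ RingHom.ker (truncate (p := p) m) := Ideal.mul_mem_right y _ hx
  rw [mem_ker_truncate] at hx hxy ⊢
  intro i hi
  rcases Nat.lt_succ_iff_lt_or_eq.mp hi with hi | rfl
  · exact hxy i hi
  · rw [coeff_mul_of_coeff_eq_zero_of_lt hx, RingHom.mem_ker.mp hy, mul_zero]

theorem pow_two_pow_le_ker_truncate {I : Ideal (WittVector p R)} {n : ℕ}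
    (hI : ∀ i ≤ n, I ≤ RingHom.ker (ghostComponent i)) :
    I ^ 2 ^ n ≤ RingHom.ker (truncate (p := p) (n + 1)) := by
  induction n with
  | zero =>
    intro x hx
    rw [mem_ker_truncate]
    intro i hi
    obtain rfl : i = 0 := by omega
    rw [← ghostComponent_zero_apply]
    exact hI 0 le_rfl (by simpa using hx)
  | succ n ih =>
    have hpow : I ^ 2 ^ n ≤ RingHom.ker (truncate (p := p) (n + 1)) :=
      ih fun i hi => hI i (by omega)
    calc I ^ 2 ^ (n + 1) = I ^ 2 ^ n * I ^ 2 ^ n := by rw [pow_succ, pow_mul, sq]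
      _ ≤ RingHom.ker (truncate (n + 1)) * RingHom.ker (ghostComponent (n + 1)) :=
        Ideal.mul_mono hpow (Ideal.pow_le_self (by positivity) |>.trans (hI _ le_rfl))
      _ ≤ RingHom.ker (truncate (n + 1 + 1)) := ker_truncate_mul_ker_ghostComponent_le _

end WittVector

open WittVector in
/-- For the `p`-typical Witt vectors (normalized indexing, so
`W_n = TruncatedWittVector p (n+1)` with ghost components `gh_0, …, gh_n`), the total ghost
map `gh_{≤n} : W_n(A) → A^{n+1}` is integral, and its kernel `I` satisfies `I^(2^n) = 0`.
The total ghost map on the truncated Witt vectors is characterized as the unique ring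
homomorphism compatible (via the truncation map) with the ghost components of `W(A)`. -/
theorem ghost_map_integral_and_kernel_nilpotent (p : ℕ) [Fact p.Prime] (n : ℕ)
    (A : Type) [CommRing A]
    (gh : TruncatedWittVector p (n + 1) A →+* (Fin (n + 1) → A))
    (hgh : ∀ (x : WittVector p A) (i : Fin (n + 1)),
      gh (WittVector.truncate (n + 1) x) i = WittVector.ghostComponent (i : ℕ) x) :
    gh.IsIntegral ∧ (RingHom.ker gh) ^ (2 ^ n) = ⊥ := by
  refine ⟨gh.isIntegral_of_forall_isIntegralElem_single fun i a =>
    gh.isIntegralElem_single_of_apply_eq_pow (t := truncate (n + 1) (teichmuller p a))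
      (pow_pos (Fact.out : p.Prime).pos _) (by rw [hgh, ghostComponent_teichmuller]), ?_⟩
  set G := (RingHom.ker gh).comap (truncate (n + 1) : WittVector p A →+* _)
  have hG : ∀ i ≤ n, G ≤ RingHom.ker (ghostComponent i) := fun i hi x hx => by
    rw [RingHom.mem_ker, ← hgh x ⟨i, by omega⟩, RingHom.mem_ker.mp (Ideal.mem_comap.mp hx),
      Pi.zero_apply]
  have hker : RingHom.ker gh = G.map (truncate (n + 1)) :=
    (Ideal.map_comap_of_surjective _ (truncate_surjective p (n + 1) A) _).symm
  rw [hker, ← Ideal.map_pow, ← le_bot_iff, Ideal.map_le_iff_le_comap]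
  exact pow_two_pow_le_ker_truncate hG
end

section
/- Let A be a noetherian local ring with p in its maximal ideal, and let a_1,…,a_d be a regular sequence for A contained in the maximal ideal. Then the Teichmüller lifts [a_1],…,[a_d] lie in the maximal ideal of W_n(A) and form a regular sequence for W_n(A). -/
/-!
The truncation `W_{k+1}(A) → W_k(A)` is surjective, and its kernel is identified additively with
`A` through the `k`-th coordinate: its elements are `V^k x`, and `[b] * V^k x = V^k (x * F^k [b])`,
so `[b]` acts on it as multiplication by `b ^ p ^ k`. Weak regularity is stable under extensions
and under raising the terms of the sequence to a power, so induction on `k` shows that the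
`[a_i]` form a weakly regular sequence on `W_{n+1}(A)`. The quotient is nonzero because
`x ↦ x₀` is a ring map `W_{n+1}(A) → A` sending `[a_i]` to `a_i`.
-/

namespace RingTheory.Sequence

open Function Pointwise Submodule

variable {R : Type*} [CommRing R]

theorem isWeaklyRegular_of_exact {K M N : Type*} [AddCommGroup K] [AddCommGroup M]
    [AddCommGroup N] [Module R K] [Module R M] [Module R N] {ι : K →ₗ[R] M} {f : M →ₗ[R] N}
    (hι : Injective ι) (hf : Surjective f) (hex : Exact ι f) {rs : List R}
    (hK : IsWeaklyRegular K rs) (hN : IsWeaklyRegular N rs) : IsWeaklyRegular M rs := by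
  induction rs generalizing K M N with
  | nil => exact .nil R M
  | cons r rs ih =>
    rw [isWeaklyRegular_cons_iff] at hK hN ⊢
    have hι' : Injective (QuotSMulTop.map r ι) := by
      have := QuotSMulTop.map_first_exact_on_four_term_exact_of_isSMulRegular_last
        ((LinearMap.exact_zero_iff_injective PUnit ι).mpr hι) hex hN.1
      rwa [map_zero, LinearMap.exact_zero_iff_injective] at this
    exact ⟨isSMulRegular_of_range_eq_ker hι hex.linearMap_ker_eq.symm hK.1 hN.1,
      ih hι' (QuotSMulTop.map_surjective r hf) (QuotSMulTop.map_exact r hex hf) hK.2 hN.2⟩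

variable {M : Type*} [AddCommGroup M] [Module R M]

lemma IsWeaklyRegular.of_subsingleton [Subsingleton M] (rs : List R) : IsWeaklyRegular M rs := by
  induction rs generalizing M with
  | nil => exact .nil R M
  | cons r rs ih => exact .cons (fun x y _ => Subsingleton.elim x y) ih

lemma mem_smul_top_iff_exists_smul_eq (r : R) (x : M) :
    x ∈ r • (⊤ : Submodule R M) ↔ ∃ y, r • y = x := by
  simp [mem_smul_pointwise_iff_exists]

lemma smul_top_le_comap_smul_pow (r : R) (j : ℕ) :
    r • (⊤ : Submodule R M) ≤
      (r ^ (j + 1) • ⊤ : Submodule R M).comap (r ^ j • LinearMap.id) := by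
  intro x hx
  obtain ⟨y, rfl⟩ := (mem_smul_top_iff_exists_smul_eq r x).mp hx
  rw [mem_comap, LinearMap.smul_apply, LinearMap.id_apply, smul_smul, ← pow_succ]
  exact (mem_smul_top_iff_exists_smul_eq _ _).mpr ⟨y, rfl⟩

lemma pow_succ_smul_top_le (r : R) (j : ℕ) :
    (r ^ (j + 1) • ⊤ : Submodule R M) ≤ r ^ j • ⊤ := by
  intro x hx
  obtain ⟨y, rfl⟩ := (mem_smul_top_iff_exists_smul_eq _ x).mp hx
  rw [pow_succ, mul_smul]
  exact (mem_smul_top_iff_exists_smul_eq _ _).mpr ⟨_, rfl⟩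

lemma injective_mapQ_smul_pow {r : R} (hr : IsSMulRegular M r) (j : ℕ) :
    Injective (mapQ _ _ _ (smul_top_le_comap_smul_pow (M := M) r j)) := by
  rw [← LinearMap.ker_eq_bot, eq_bot_iff]
  rintro ⟨x⟩ hx
  obtain ⟨y, hy⟩ := (mem_smul_top_iff_exists_smul_eq _ _).mp ((Quotient.mk_eq_zero _).mp hx)
  rw [LinearMap.smul_apply, LinearMap.id_apply, pow_succ, mul_smul] at hy
  exact (Quotient.mk_eq_zero _).mpr ((mem_smul_top_iff_exists_smul_eq _ _).mpr ⟨y, hr.pow j hy⟩)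

lemma exact_mapQ_smul_pow_factor (r : R) (j : ℕ) :
    Exact (mapQ _ _ _ (smul_top_le_comap_smul_pow (M := M) r j))
      (factor (pow_succ_smul_top_le (M := M) r j)) := by
  rintro ⟨x⟩
  rw [Quotient.quot_mk_eq_mk, ← mkQ_apply, factor_mk, mkQ_apply, Quotient.mk_eq_zero,
    mem_smul_top_iff_exists_smul_eq]
  constructor
  · rintro ⟨y, rfl⟩
    exact ⟨Submodule.Quotient.mk y, by simp⟩
  · rintro ⟨⟨y⟩, hy⟩
    rw [Quotient.quot_mk_eq_mk, mapQ_apply, mkQ_apply, Submodule.Quotient.eq,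
      mem_smul_top_iff_exists_smul_eq] at hy
    obtain ⟨z, hz⟩ := hy
    refine ⟨y - r • z, ?_⟩
    rw [smul_sub, smul_smul, ← pow_succ, hz, LinearMap.smul_apply, LinearMap.id_apply,
      sub_sub_cancel]

lemma isWeaklyRegular_quotSMulTop_pow {r : R} (hr : IsSMulRegular M r) {rs : List R}
    (h : IsWeaklyRegular (QuotSMulTop r M) rs) (j : ℕ) :
    IsWeaklyRegular (QuotSMulTop (r ^ j) M) rs := by
  induction j with
  | zero =>
    have : Subsingleton (QuotSMulTop (r ^ 0) M) := by
      rw [pow_zero, QuotSMulTop, Submodule.Quotient.subsingleton_iff, one_smul]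
    exact .of_subsingleton rs
  | succ j ih =>
    exact isWeaklyRegular_of_exact (injective_mapQ_smul_pow hr j) (factor_surjective _)
      (exact_mapQ_smul_pow_factor r j) h ih

lemma IsWeaklyRegular.map_pow {rs : List R} (h : IsWeaklyRegular M rs) (k : ℕ) :
    IsWeaklyRegular M (rs.map (· ^ k)) := by
  induction rs generalizing M with
  | nil => exact .nil R M
  | cons r rs ih =>
    rw [isWeaklyRegular_cons_iff] at h
    exact .cons (h.1.pow k) (isWeaklyRegular_quotSMulTop_pow h.1 (ih h.2) k)

end RingTheory.Sequence

namespace WittVector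

variable {p : ℕ} [Fact p.Prime] {A : Type*} [CommRing A]

local notation "𝕎" => WittVector p

lemma coeff_iterate_verschiebung_self (x : 𝕎 A) (k : ℕ) :
    (verschiebung^[k] x).coeff k = x.coeff 0 := by
  simpa only [zero_add] using iterate_verschiebung_coeff x k 0

lemma coeff_add_of_forall_coeff_lt_eq_zero {k : ℕ} {x y : 𝕎 A} (hx : ∀ i < k, x.coeff i = 0)
    (hy : ∀ i < k, y.coeff i = 0) : (x + y).coeff k = x.coeff k + y.coeff k := by
  rw [eq_iterate_verschiebung hx, eq_iterate_verschiebung hy, ← iterate_map_add,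
    coeff_iterate_verschiebung_self, coeff_iterate_verschiebung_self,
    coeff_iterate_verschiebung_self, add_coeff_zero]

lemma coeff_zero_iterate_frobenius (x : 𝕎 A) (k : ℕ) :
    (frobenius^[k] x).coeff 0 = ghostComponent k x := by
  induction k generalizing x with
  | zero => simp [ghostComponent_apply]
  | succ k ih => rw [Function.iterate_succ_apply, ih, ghostComponent_frobenius]

lemma coeff_teichmuller_mul_of_forall_coeff_lt_eq_zero {k : ℕ} {x : 𝕎 A}
    (hx : ∀ i < k, x.coeff i = 0) (b : A) :
    (teichmuller p b * x).coeff k = b ^ p ^ k * x.coeff k := by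
  rw [eq_iterate_verschiebung hx, mul_comm, iterate_verschiebung_mul_left,
    coeff_iterate_verschiebung_self, coeff_iterate_verschiebung_self, mul_coeff_zero,
    coeff_zero_iterate_frobenius, ghostComponent_teichmuller, mul_comm]

end WittVector

namespace TruncatedWittVector

open Function WittVector RingTheory.Sequence

variable {p : ℕ} [Fact p.Prime] {A : Type*} [CommRing A]

local notation "𝕎" => WittVector p

variable (p) in
noncomputable def constantCoeff (n : ℕ) : TruncatedWittVector p (n + 1) A →+* A :=
  (WittVector.truncate (n + 1)).liftOfSurjective (WittVector.truncate_surjective p _ A)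
    ⟨WittVector.constantCoeff, fun x hx => (mem_ker_truncate _ x).mp hx 0 n.succ_pos⟩

lemma constantCoeff_truncate (n : ℕ) (x : 𝕎 A) :
    constantCoeff p n (WittVector.truncate (n + 1) x) = x.coeff 0 :=
  RingHom.liftOfRightInverse_comp_apply _ _ _ _ x

noncomputable instance (k : ℕ) : Algebra (𝕎 A) (TruncatedWittVector p k A) :=
  (WittVector.truncate k).toAlgebra

lemma algebraMap_eq_truncate (k : ℕ) :
    algebraMap (𝕎 A) (TruncatedWittVector p k A) = WittVector.truncate k :=
  rfl

noncomputable def truncateAlgHom {m k : ℕ} (h : m ≤ k) :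
    TruncatedWittVector p k A →ₐ[𝕎 A] TruncatedWittVector p m A :=
  { truncate h with commutes' := truncate_wittVector_truncate h }

variable (p A) in
noncomputable abbrev kerTruncate (k : ℕ) : Submodule (𝕎 A) (TruncatedWittVector p (k + 1) A) :=
  LinearMap.ker (truncateAlgHom k.le_succ).toLinearMap

lemma truncate_mem_kerTruncate_iff (k : ℕ) (x : 𝕎 A) :
    WittVector.truncate (k + 1) x ∈ kerTruncate p A k ↔ ∀ i < k, x.coeff i = 0 := by
  rw [LinearMap.mem_ker, ← mem_ker_truncate, RingHom.mem_ker]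
  exact iff_of_eq (congrArg (· = 0) (truncate_wittVector_truncate k.le_succ x))

variable (p A) in
noncomputable def kerTruncateCoeff (k : ℕ) : kerTruncate p A k →+ A :=
  AddMonoidHom.mk' (fun x => (x : TruncatedWittVector p (k + 1) A).coeff (Fin.last k)) <| by
    rintro ⟨x, hx⟩ ⟨y, hy⟩
    obtain ⟨x, rfl⟩ := WittVector.truncate_surjective p _ A x
    obtain ⟨y, rfl⟩ := WittVector.truncate_surjective p _ A y
    rw [truncate_mem_kerTruncate_iff] at hx hy
    simp only [Submodule.coe_add, ← map_add, WittVector.coeff_truncate, Fin.val_last]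
    exact coeff_add_of_forall_coeff_lt_eq_zero hx hy

lemma kerTruncateCoeff_apply (k : ℕ) (x : kerTruncate p A k) :
    kerTruncateCoeff p A k x = (x : TruncatedWittVector p (k + 1) A).coeff (Fin.last k) :=
  rfl

lemma kerTruncateCoeff_bijective (k : ℕ) : Bijective (kerTruncateCoeff p A k) := by
  constructor
  · rw [injective_iff_map_eq_zero]
    rintro ⟨x, hx⟩ hlast
    obtain ⟨x, rfl⟩ := WittVector.truncate_surjective p _ A x
    rw [truncate_mem_kerTruncate_iff] at hx
    rw [kerTruncateCoeff_apply, WittVector.coeff_truncate, Fin.val_last] at hlast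
    refine Subtype.ext ((mem_ker_truncate _ x).mpr fun i hi => ?_)
    rcases (Nat.lt_succ_iff.mp hi).lt_or_eq with hi | rfl
    exacts [hx i hi, hlast]
  · intro c
    refine ⟨⟨WittVector.truncate (k + 1) (verschiebung^[k] (teichmuller p c)),
      (truncate_mem_kerTruncate_iff k _).mpr fun i hi => iterate_verschiebung_coeff_eq_zero _ hi⟩,
      ?_⟩
    rw [kerTruncateCoeff_apply, WittVector.coeff_truncate, Fin.val_last,
      coeff_iterate_verschiebung_self, teichmuller_coeff_zero]

lemma kerTruncateCoeff_teichmuller_smul (k : ℕ) (b : A) (x : kerTruncate p A k) :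
    kerTruncateCoeff p A k (teichmuller p b • x) = b ^ p ^ k * kerTruncateCoeff p A k x := by
  obtain ⟨x, hx⟩ := x
  obtain ⟨x, rfl⟩ := WittVector.truncate_surjective p _ A x
  rw [truncate_mem_kerTruncate_iff] at hx
  simp only [kerTruncateCoeff_apply, SetLike.val_smul, Algebra.smul_def, algebraMap_eq_truncate,
    ← map_mul, WittVector.coeff_truncate, Fin.val_last]
  exact coeff_teichmuller_mul_of_forall_coeff_lt_eq_zero hx b

theorem isWeaklyRegular_map_teichmuller {rs : List A} (h : IsWeaklyRegular A rs) (k : ℕ) :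
    IsWeaklyRegular (TruncatedWittVector p k A) (rs.map (teichmuller p)) := by
  induction k with
  | zero =>
    have : Subsingleton (TruncatedWittVector p 0 A) := ⟨fun x y => ext fun i => i.elim0⟩
    exact .of_subsingleton _
  | succ k ih =>
    have hker : IsWeaklyRegular (kerTruncate p A k) (rs.map (teichmuller p)) :=
      ((AddEquiv.ofBijective _ (kerTruncateCoeff_bijective k)).isWeaklyRegular_congr <|
        List.forall₂_map_left_iff.mpr <| List.forall₂_map_right_iff.mpr <|
          List.forall₂_same.mpr fun b _ => kerTruncateCoeff_teichmuller_smul k b).mpr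
        (h.map_pow (p ^ k))
    exact isWeaklyRegular_of_exact (Submodule.injective_subtype _) (truncate_surjective k.le_succ)
      (LinearMap.exact_subtype_ker_map _) hker ih

end TruncatedWittVector

theorem teichmuller_lift_of_regular_sequence_general (p : ℕ) [Fact p.Prime] (n : ℕ)
    (A : Type) [CommRing A] [IsLocalRing A]
    (d : ℕ) (a : Fin d → A)
    (ha : ∀ i, a i ∈ IsLocalRing.maximalIdeal A)
    (hreg : RingTheory.Sequence.IsRegular A (List.ofFn a)) :
    (∀ i, WittVector.truncate (n + 1) (WittVector.teichmuller p (a i)) ∈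
        nonunits (TruncatedWittVector p (n + 1) A)) ∧
    RingTheory.Sequence.IsRegular (TruncatedWittVector p (n + 1) A)
      (List.ofFn fun i => WittVector.truncate (n + 1) (WittVector.teichmuller p (a i))) := by
  have hcoeff (i : Fin d) : TruncatedWittVector.constantCoeff p n
      (WittVector.truncate (n + 1) (WittVector.teichmuller p (a i))) = a i := by
    rw [TruncatedWittVector.constantCoeff_truncate, WittVector.teichmuller_coeff_zero]
  have hlist : (List.ofFn fun i => WittVector.truncate (n + 1) (WittVector.teichmuller p (a i))) =
      ((List.ofFn a).map (WittVector.teichmuller p)).map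
        (algebraMap (WittVector p A) (TruncatedWittVector p (n + 1) A)) := by
    simp only [List.map_ofFn]; rfl
  refine ⟨fun i hunit => ?_, ?_, ?_⟩
  · exact (IsLocalRing.mem_maximalIdeal _).mp (ha i) (hcoeff i ▸ hunit.map _)
  · rw [hlist, RingTheory.Sequence.isWeaklyRegular_map_algebraMap_iff]
    exact TruncatedWittVector.isWeaklyRegular_map_teichmuller hreg.toIsWeaklyRegular _
  · intro htop
    apply hreg.top_ne_smul
    rw [Ideal.smul_eq_mul, Ideal.mul_top] at htop ⊢
    rw [← Ideal.map_top (TruncatedWittVector.constantCoeff p n), htop, Ideal.map_ofList,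
      List.map_ofFn]
    exact congrArg _ (congrArg _ (funext hcoeff))

/-- Let `A` be a noetherian local ring with `p` in its maximal ideal, and let
`a_1, …, a_d` be a regular sequence for `A` contained in the maximal ideal. Then the
Teichmüller lifts `[a_1], …, [a_d]` lie in the maximal ideal of the local ring `W_n(A)`
(equivalently, are nonunits) and form a regular sequence for `W_n(A)`.
(Normalized indexing: `W_n = TruncatedWittVector p (n+1)`.) -/
theorem teichmuller_lift_of_regular_sequence (p : ℕ) [Fact p.Prime] (n : ℕ)
    (A : Type) [CommRing A] [IsLocalRing A] [IsNoetherianRing A]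
    (hp : (p : A) ∈ IsLocalRing.maximalIdeal A)
    (d : ℕ) (a : Fin d → A)
    (ha : ∀ i, a i ∈ IsLocalRing.maximalIdeal A)
    (hreg : RingTheory.Sequence.IsRegular A (List.ofFn a)) :
    (∀ i, WittVector.truncate (n + 1) (WittVector.teichmuller p (a i)) ∈
        nonunits (TruncatedWittVector p (n + 1) A)) ∧
    RingTheory.Sequence.IsRegular (TruncatedWittVector p (n + 1) A)
      (List.ofFn fun i => WittVector.truncate (n + 1) (WittVector.teichmuller p (a i))) :=
  teichmuller_lift_of_regular_sequence_general p n A d a ha hreg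
end

section
/- If A is a finitely generated ℤ-algebra (or R-algebra for R noetherian), then W_n(A) is a finitely generated algebra: if T is a finite generating set of A, then W_n(A) is generated as a module over the subring generated by the Teichmüller lifts [t], t ∈ T, by the elements V_p^k[∏_t t^{a_t}] with 0 ≤ a_t < p^k and 0 ≤ k ≤ n. -/
open Function WittVector

namespace WittFT

variable {p : ℕ} [hp : Fact p.Prime]

local notation "𝕎" => WittVector p

open MvPolynomial

private theorem frob_teich_aux₁ {R : Type} [CommRing R] (x : MvPolynomial R ℚ) :
    frobenius (teichmuller p x) = teichmuller p (x ^ p) := by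
  apply (ghostMap.bijective_of_invertible p (MvPolynomial R ℚ)).1
  funext k
  simp only [ghostMap_apply, ghostComponent_frobenius, ghostComponent_teichmuller,
    ← pow_mul, ← pow_succ']

private theorem frob_teich_aux₂ {R : Type} [CommRing R] (x : MvPolynomial R ℤ) :
    frobenius (teichmuller p x) = teichmuller p (x ^ p) := by
  refine WittVector.map_injective (MvPolynomial.map (Int.castRingHom ℚ))
    (MvPolynomial.map_injective _ Int.cast_injective) ?_
  rw [(frobenius_isPoly p).map, map_teichmuller, frob_teich_aux₁]; simp [map_pow]

theorem frobenius_teichmuller {R : Type} [CommRing R] (r : R) :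
    frobenius (teichmuller p r) = teichmuller p (r ^ p) := by
  obtain ⟨x, rfl⟩ := counit_surjective R r
  rw [← map_teichmuller, ← (frobenius_isPoly p).map, frob_teich_aux₂, map_teichmuller, map_pow]

theorem iterate_frobenius_teichmuller {R : Type} [CommRing R] (r : R) (m : ℕ) :
    frobenius^[m] (teichmuller p r) = teichmuller p (r ^ p ^ m) := by
  induction m with
  | zero => simp
  | succ m ih => rw [iterate_succ_apply', ih, frobenius_teichmuller, ← pow_mul, ← pow_succ]

theorem teichmuller_mul_iterate_verschiebung {R : Type} [CommRing R] (r : R) (x : 𝕎 R) (m : ℕ) :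
    teichmuller p r * verschiebung^[m] x
      = verschiebung^[m] (teichmuller p (r ^ p ^ m) * x) := by
  rw [mul_comm, iterate_verschiebung_mul_left, iterate_frobenius_teichmuller, mul_comm]

theorem eq_verschiebung_of_coeff_zero {R : Type} [CommRing R] (w : 𝕎 R) (h : w.coeff 0 = 0) :
    ∃ c, w = verschiebung c := by
  refine ⟨⟨fun i => w.coeff (i + 1)⟩, ?_⟩
  ext i
  cases i with
  | zero => rw [verschiebung_coeff_zero, h]
  | succ i => rw [verschiebung_coeff_succ]

theorem ghostComponent_zero_eq {R : Type} [CommRing R] (w : 𝕎 R) :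
    ghostComponent (p := p) 0 w = w.coeff 0 := by
  rw [ghostComponent_apply, wittPolynomial_zero, aeval_X]

theorem exists_eq_teichmuller_add {R : Type} [CommRing R] (w : 𝕎 R) :
    ∃ c, w = teichmuller p (w.coeff 0) + verschiebung c := by
  obtain ⟨c, hc⟩ := eq_verschiebung_of_coeff_zero (w - teichmuller p (w.coeff 0)) (by
    rw [← ghostComponent_zero_eq, map_sub, ghostComponent_zero_eq, ghostComponent_zero_eq,
      teichmuller_coeff_zero, sub_self])
  exact ⟨c, by rw [← hc]; ring⟩

theorem iterate_verschiebung_coeff_eq_zero {R : Type} [CommRing R] (w : 𝕎 R) (m i : ℕ)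
    (h : i < m) : (verschiebung^[m] w).coeff i = 0 := by
  induction m generalizing i with
  | zero => omega
  | succ m ih =>
    rw [iterate_succ_apply']
    cases i with
    | zero => rw [verschiebung_coeff_zero]
    | succ i => rw [verschiebung_coeff_succ]; exact ih i (by omega)

theorem iterate_verschiebung_add {R : Type} [CommRing R] (u v : 𝕎 R) (m : ℕ) :
    verschiebung^[m] (u + v) = verschiebung^[m] u + verschiebung^[m] v := by
  induction m generalizing u v with
  | zero => rfl
  | succ m ih => simp only [iterate_succ_apply]; rw [map_add, ih]

theorem iterate_verschiebung_sub {R : Type} [CommRing R] (u v : 𝕎 R) (m : ℕ) :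
    verschiebung^[m] (u - v) = verschiebung^[m] u - verschiebung^[m] v := by
  induction m generalizing u v with
  | zero => rfl
  | succ m ih => simp only [iterate_succ_apply]; rw [map_sub, ih]

theorem iterate_verschiebung_zero {R : Type} [CommRing R] (m : ℕ) :
    verschiebung^[m] (0 : 𝕎 R) = 0 :=
  Function.iterate_fixed (verschiebung (p := p) (R := R)).map_zero m

variable {n : ℕ} {A : Type} [CommRing A] (T : Finset A)

theorem span_top (hT : Algebra.adjoin ℤ (T : Set A) = ⊤) :
    Submodule.span
      ↥(Algebra.adjoin ℤ
        ((fun t => WittVector.truncate (n + 1) (WittVector.teichmuller p t)) '' (T : Set A)))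
      { w : TruncatedWittVector p (n + 1) A | ∃ (k : Fin (n + 1)) (a : A → ℕ),
          (∀ t ∈ T, a t < p ^ (k : ℕ)) ∧
          w = WittVector.truncate (n + 1)
            ((fun x => WittVector.verschiebung x)^[(k : ℕ)]
              (WittVector.teichmuller p (∏ t ∈ T, t ^ a t))) } = ⊤ := by
  classical
  set S := Algebra.adjoin ℤ
      ((fun t => WittVector.truncate (n + 1) (WittVector.teichmuller p t)) '' (T : Set A))
      with hSdef
  set G : Set (TruncatedWittVector p (n + 1) A) :=
      { w : TruncatedWittVector p (n + 1) A | ∃ (k : Fin (n + 1)) (a : A → ℕ),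
          (∀ t ∈ T, a t < p ^ (k : ℕ)) ∧
          w = WittVector.truncate (n + 1)
            ((fun x => WittVector.verschiebung x)^[(k : ℕ)]
              (WittVector.teichmuller p (∏ t ∈ T, t ^ a t))) } with hGdef
  set M := Submodule.span ↥S G with hMdef
  -- membership of generators
  have hGmem : ∀ (k : ℕ), k ≤ n → ∀ (a : A → ℕ), (∀ t ∈ T, a t < p ^ k) →
      WittVector.truncate (n + 1)
        (verschiebung^[k] (teichmuller p (∏ t ∈ T, t ^ a t))) ∈ G := by
    intro k hk a ha
    rw [hGdef]
    show ∃ (k' : Fin (n + 1)) (b : A → ℕ),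
      (∀ t ∈ T, b t < p ^ (k' : ℕ)) ∧
      WittVector.truncate (n + 1)
        (verschiebung^[k] (teichmuller p (∏ t ∈ T, t ^ a t))) = WittVector.truncate (n + 1)
          ((fun x => WittVector.verschiebung x)^[(k' : ℕ)]
            (WittVector.teichmuller p (∏ t ∈ T, t ^ b t)))
    exact ⟨⟨k, Nat.lt_succ_of_le hk⟩, a, ha, rfl⟩
  -- arbitrary monomials are in M
  have hMono : ∀ (k : ℕ), k ≤ n → ∀ (a : A → ℕ),
      WittVector.truncate (n + 1)
        (verschiebung^[k] (teichmuller p (∏ t ∈ T, t ^ a t))) ∈ M := by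
    intro k hk a
    have hg := hGmem k hk (fun t => a t % p ^ k)
      (fun t _ => Nat.mod_lt _ (pow_pos hp.out.pos k))
    have hs : (∏ t ∈ T, (WittVector.truncate (n + 1) (teichmuller p t)) ^ (a t / p ^ k)) ∈ S := by
      rw [hSdef]
      exact Subalgebra.prod_mem _ fun t ht =>
        Subalgebra.pow_mem _ (Algebra.subset_adjoin (Set.mem_image_of_mem _ ht)) _
    have hsm := M.smul_mem (⟨_, hs⟩ : ↥S) (Submodule.subset_span hg)
    have hmr : (∏ t ∈ T, t ^ a t)
        = (∏ t ∈ T, t ^ (a t / p ^ k)) ^ p ^ k * ∏ t ∈ T, t ^ (a t % p ^ k) := by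
      rw [← Finset.prod_pow, ← Finset.prod_mul_distrib]
      refine Finset.prod_congr rfl fun t _ => ?_
      rw [← pow_mul, ← pow_add]
      congr 1
      rw [mul_comm]
      exact (Nat.div_add_mod (a t) (p ^ k)).symm
    have heq : (⟨_, hs⟩ : ↥S) • WittVector.truncate (n + 1)
          (verschiebung^[k] (teichmuller p (∏ t ∈ T, t ^ (a t % p ^ k))))
        = WittVector.truncate (n + 1)
          (verschiebung^[k] (teichmuller p (∏ t ∈ T, t ^ a t))) := by
      have hsmul : (⟨_, hs⟩ : ↥S) • WittVector.truncate (n + 1)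
            (verschiebung^[k] (teichmuller p (∏ t ∈ T, t ^ (a t % p ^ k))))
          = (∏ t ∈ T, (WittVector.truncate (n + 1) (teichmuller p t)) ^ (a t / p ^ k)) *
            WittVector.truncate (n + 1)
              (verschiebung^[k] (teichmuller p (∏ t ∈ T, t ^ (a t % p ^ k)))) := rfl
      have h1 : WittVector.truncate (n + 1) (teichmuller p (∏ t ∈ T, t ^ (a t / p ^ k)))
          = (∏ t ∈ T, (WittVector.truncate (n + 1) (teichmuller p t)) ^ (a t / p ^ k)) := by
        rw [map_prod (teichmuller p) (fun t => t ^ (a t / p ^ k)) T,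
          map_prod (WittVector.truncate (n + 1)) (fun t => teichmuller p (t ^ (a t / p ^ k))) T]
        refine Finset.prod_congr rfl fun t _ => ?_
        rw [map_pow, map_pow]
      rw [hsmul, ← h1, ← map_mul, teichmuller_mul_iterate_verschiebung, ← map_mul, ← hmr]
    rw [← heq]
    exact hsm
  -- zero for high Verschiebung
  have hzero : ∀ (m : ℕ), n + 1 ≤ m → ∀ w : 𝕎 A,
      WittVector.truncate (n + 1) (verschiebung^[m] w) = 0 := by
    intro m hm w
    apply TruncatedWittVector.ext
    intro i
    rw [WittVector.coeff_truncate, TruncatedWittVector.coeff_zero,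
      iterate_verschiebung_coeff_eq_zero _ m i (by omega)]
  -- monomials generate A additively
  set Mon : Set A := { x | ∃ a : A → ℕ, x = ∏ t ∈ T, t ^ a t } with hMonDef
  have hMon_one : (1 : A) ∈ Mon := ⟨fun _ => 0, by simp⟩
  have hMon_T : ∀ t ∈ T, t ∈ Mon := by
    intro t ht
    refine ⟨fun s => if s = t then 1 else 0, ?_⟩
    simp only [pow_ite, pow_one, pow_zero, Finset.prod_ite_eq', ht, if_true]
  have hMon_mul : ∀ x ∈ Mon, ∀ y ∈ Mon, x * y ∈ Mon := by
    rintro _ ⟨a, rfl⟩ _ ⟨b, rfl⟩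
    refine ⟨fun t => a t + b t, ?_⟩
    rw [← Finset.prod_mul_distrib]
    exact Finset.prod_congr rfl fun t _ => (pow_add t (a t) (b t)).symm
  have hclosure_mul : ∀ x ∈ AddSubgroup.closure Mon, ∀ y ∈ AddSubgroup.closure Mon,
      x * y ∈ AddSubgroup.closure Mon := by
    intro x hx y hy
    refine AddSubgroup.closure_induction₂ (fun u v hu hv =>
        AddSubgroup.subset_closure (hMon_mul u hu v hv)) ?_ ?_ ?_ ?_ ?_ ?_ hx hy
    · intro v _; rw [zero_mul]; exact zero_mem _
    · intro u _; rw [mul_zero]; exact zero_mem _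
    · intro u₁ u₂ v _ _ _ h1 h2; rw [add_mul]; exact add_mem h1 h2
    · intro v₁ v₂ u _ _ _ h1 h2; rw [mul_add]; exact add_mem h1 h2
    · intro u v _ _ h; rw [neg_mul]; exact neg_mem h
    · intro u v _ _ h; rw [mul_neg]; exact neg_mem h
  have hRng : ∀ x : A, x ∈ AddSubgroup.closure Mon := by
    intro x
    have hx : x ∈ Subring.closure (T : Set A) := by
      have h1 : (⊤ : Subalgebra ℤ A) = subalgebraOfSubring (Subring.closure (T : Set A)) := by
        rw [← hT, Algebra.adjoin_int]
      have h2 : x ∈ (⊤ : Subalgebra ℤ A) := trivial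
      rw [h1] at h2
      exact h2
    refine Subring.closure_induction
      (fun t ht => AddSubgroup.subset_closure (hMon_T t ht))
      (zero_mem _) (AddSubgroup.subset_closure hMon_one)
      (fun a b _ _ ha hb => add_mem ha hb)
      (fun a _ ha => neg_mem ha)
      (fun a b ha' hb' ha hb => hclosure_mul a ha b hb) hx
  -- main downward induction
  have hV : ∀ (j m : ℕ), n + 1 ≤ m + j → ∀ w : 𝕎 A,
      WittVector.truncate (n + 1) (verschiebung^[m] w) ∈ M := by
    intro j
    induction j with
    | zero =>
      intro m hm w
      rw [hzero m (by omega) w]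
      exact M.zero_mem
    | succ j ih =>
      intro m hm w
      by_cases hmn : n + 1 ≤ m
      · rw [hzero m hmn w]; exact M.zero_mem
      push_neg at hmn
      have ih' : ∀ u : 𝕎 A, WittVector.truncate (n + 1) (verschiebung^[m] (verschiebung u)) ∈ M := by
        intro u
        have := ih (m + 1) (by omega) u
        rwa [iterate_succ_apply] at this
      have hteich : ∀ x : A,
          WittVector.truncate (n + 1) (verschiebung^[m] (teichmuller p x)) ∈ M := by
        intro x
        refine AddSubgroup.closure_induction ?_ ?_ ?_ ?_ (hRng x)
        · rintro _ ⟨a, rfl⟩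
          exact hMono m (by omega) a
        · rw [teichmuller_zero, iterate_verschiebung_zero, map_zero]
          exact M.zero_mem
        · intro u v _ _ hu hv
          obtain ⟨c, hc⟩ := exists_eq_teichmuller_add (teichmuller p u + teichmuller p v)
          have hc0 : (teichmuller p u + teichmuller p v).coeff 0 = u + v := by
            rw [← ghostComponent_zero_eq, map_add, ghostComponent_zero_eq,
              ghostComponent_zero_eq, teichmuller_coeff_zero, teichmuller_coeff_zero]
          rw [hc0] at hc
          have : teichmuller p (u + v)
              = teichmuller p u + teichmuller p v - verschiebung c := by
            rw [hc]; ring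
          rw [this, iterate_verschiebung_sub, iterate_verschiebung_add, map_sub, map_add]
          exact sub_mem (add_mem hu hv) (ih' c)
        · intro u _ hu
          obtain ⟨c, hc⟩ := exists_eq_teichmuller_add (-teichmuller p u)
          have hc0 : (-teichmuller p u).coeff 0 = -u := by
            rw [← ghostComponent_zero_eq, map_neg, ghostComponent_zero_eq,
              teichmuller_coeff_zero]
          rw [hc0] at hc
          have : teichmuller p (-u) = -teichmuller p u - verschiebung c := by
            rw [hc]; ring
          rw [this, iterate_verschiebung_sub, map_sub]
          refine sub_mem ?_ (ih' c)
          have : verschiebung^[m] (-teichmuller p u) = -(verschiebung^[m] (teichmuller p u)) := by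
            have := iterate_verschiebung_sub (0 : 𝕎 A) (teichmuller p u) m
            rwa [zero_sub, iterate_verschiebung_zero, zero_sub] at this
          rw [this, map_neg]
          exact neg_mem hu
      obtain ⟨c, hc⟩ := exists_eq_teichmuller_add w
      rw [hc, iterate_verschiebung_add, map_add]
      exact add_mem (hteich _) (ih' c)
  rw [eq_top_iff]
  intro w _
  obtain ⟨w', rfl⟩ := WittVector.truncate_surjective (p := p) (n + 1) A w
  exact hV (n + 1) 0 (by omega) w'

theorem finite_type (hT : Algebra.adjoin ℤ (T : Set A) = ⊤) :
    Algebra.FiniteType ℤ (TruncatedWittVector p (n + 1) A) := by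
  classical
  set D : Finset (TruncatedWittVector p (n + 1) A) :=
    ((Finset.range (n + 1)) ×ˢ (T.pi fun _ => Finset.range (p ^ n))).image
      (fun kb => WittVector.truncate (n + 1) (verschiebung^[kb.1]
        (teichmuller p (∏ t ∈ T.attach, (t : A) ^ kb.2 t.1 t.2)))) with hD
  refine ⟨⟨(T.image fun t => WittVector.truncate (n + 1) (teichmuller p t)) ∪ D, ?_⟩⟩
  rw [eq_top_iff]
  rintro w -
  have hspan := span_top (p := p) (n := n) T hT
  have hw : w ∈ Submodule.span
      ↥(Algebra.adjoin ℤ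
        ((fun t => WittVector.truncate (n + 1) (WittVector.teichmuller p t)) '' (T : Set A)))
      { w : TruncatedWittVector p (n + 1) A | ∃ (k : Fin (n + 1)) (a : A → ℕ),
          (∀ t ∈ T, a t < p ^ (k : ℕ)) ∧
          w = WittVector.truncate (n + 1)
            ((fun x => WittVector.verschiebung x)^[(k : ℕ)]
              (WittVector.teichmuller p (∏ t ∈ T, t ^ a t))) } := by
    rw [hspan]; trivial
  refine Submodule.span_induction ?_ ?_ ?_ ?_ hw
  · rintro x ⟨k, a, ha, rfl⟩
    apply Algebra.subset_adjoin
    rw [Finset.coe_union]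
    refine Or.inr ?_
    rw [Finset.mem_coe, hD, Finset.mem_image]
    refine ⟨((k : ℕ), fun t _ => a t), ?_, ?_⟩
    · rw [Finset.mem_product]
      constructor
      · exact Finset.mem_range.mpr k.isLt
      · rw [Finset.mem_pi]
        intro t ht
        rw [Finset.mem_range]
        exact lt_of_lt_of_le (ha t ht)
          (Nat.pow_le_pow_right hp.out.pos (Nat.lt_succ_iff.mp k.isLt))
    · congr 1
      rw [Finset.prod_attach T (fun t => t ^ a t)]
  · exact Subalgebra.zero_mem _
  · intro x y _ _ hx hy
    exact Subalgebra.add_mem _ hx hy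
  · intro s x _ hx
    have hs' : (s : TruncatedWittVector p (n + 1) A) ∈ Algebra.adjoin ℤ
        (((T.image fun t => WittVector.truncate (n + 1) (teichmuller p t)) ∪ D : Finset _) :
          Set (TruncatedWittVector p (n + 1) A)) := by
      refine Algebra.adjoin_mono ?_ s.2
      rw [Finset.coe_union, ← Finset.coe_image]
      exact Set.subset_union_left
    have hsx : s • x = (s : TruncatedWittVector p (n + 1) A) * x := rfl
    rw [hsx]
    exact Subalgebra.mul_mem _ hs' hx

end WittFT

/-- If `A` is a finitely generated `ℤ`-algebra, then `W_n(A)` is a finitely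
generated algebra: if `T` is a finite generating set of `A`, then `W_n(A)` is generated as a
module over the subring generated by the Teichmüller lifts `[t]`, `t ∈ T`, by the elements
`V_p^k [∏_t t^(a_t)]` with `0 ≤ a_t < p^k` and `0 ≤ k ≤ n`.
(Normalized indexing: `W_n = TruncatedWittVector p (n+1)`.) -/
theorem witt_finite_type (p : ℕ) [Fact p.Prime] (n : ℕ)
    (A : Type) [CommRing A] (T : Finset A)
    (hT : Algebra.adjoin ℤ (T : Set A) = ⊤) :
    Algebra.FiniteType ℤ (TruncatedWittVector p (n + 1) A) ∧
    Submodule.span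
      ↥(Algebra.adjoin ℤ
        ((fun t => WittVector.truncate (n + 1) (WittVector.teichmuller p t)) '' (T : Set A)))
      { w : TruncatedWittVector p (n + 1) A | ∃ (k : Fin (n + 1)) (a : A → ℕ),
          (∀ t ∈ T, a t < p ^ (k : ℕ)) ∧
          w = WittVector.truncate (n + 1)
            ((fun x => WittVector.verschiebung x)^[(k : ℕ)]
              (WittVector.teichmuller p (∏ t ∈ T, t ^ a t))) } = ⊤ :=
  ⟨WittFT.finite_type T hT, WittFT.span_top T hT⟩
end

section
/- For any commutative ring A, the Krull dimension of W_n(A) (p-typical Witt vectors) equals the Krull dimension of A. -/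
/-!
The total ghost map `W_{n+1}(A) → A^{n+1}` is integral: the idempotents of `A^{n+1}` are
integral, and `(a e_i)^{p^i} = w([a]) e_i` for the Teichmüller lift `[a]`. Its kernel is nil,
since vanishing ghost components force `x^{n+1} ∈ V^{n+1} W(A)`. Hence it is surjective on
spectra, so by going up and incomparability `dim W_{n+1}(A) = dim A^{n+1}`, and the diagonal
`A → A^{n+1}` is integral and injective, so `dim A^{n+1} = dim A`.
-/

section KrullDim

variable {R S : Type*} [CommRing R] [CommRing S] [Algebra R S]

theorem ringKrullDim_le_of_isIntegral [Algebra.IsIntegral R S] :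
    ringKrullDim S ≤ ringKrullDim R :=
  Order.krullDim_le_of_strictMono (PrimeSpectrum.comap (algebraMap R S))
    fun _ _ h ↦ Ideal.IsIntegral.comap_lt_comap (R := R) h

theorem ringKrullDim_le_of_hasGoingUp [Algebra.HasGoingUp R S]
    (h : Function.Surjective (PrimeSpectrum.comap (algebraMap R S))) :
    ringKrullDim R ≤ ringKrullDim S := by
  refine iSup_le fun l ↦ ?_
  obtain ⟨P, hP⟩ := h l.head
  have : P.asIdeal.LiesOver l.head.asIdeal := ⟨by rw [← hP]; rfl⟩
  obtain ⟨L, hL, -, -⟩ := Ideal.exists_ltSeries_of_hasGoingUp l P.asIdeal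
  exact hL ▸ Order.LTSeries.length_le_krullDim L

theorem ringKrullDim_eq_of_isIntegral_of_comap_surjective [Algebra.IsIntegral R S]
    (h : Function.Surjective (PrimeSpectrum.comap (algebraMap R S))) :
    ringKrullDim R = ringKrullDim S :=
  (ringKrullDim_le_of_hasGoingUp h).antisymm ringKrullDim_le_of_isIntegral

theorem PrimeSpectrum.comap_surjective_of_isIntegral_of_ker_le_nilradical
    [Algebra.IsIntegral R S] (h : RingHom.ker (algebraMap R S) ≤ nilradical R) :
    Function.Surjective (PrimeSpectrum.comap (algebraMap R S)) := by
  intro P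
  have hker : (⊥ : Ideal S).comap (algebraMap R S) ≤ P.asIdeal := by
    rw [← RingHom.ker_eq_comap_bot]
    exact h.trans (nilradical_le_prime P.asIdeal)
  obtain ⟨Q, -, hQ, hQP⟩ := Ideal.exists_ideal_over_prime_of_isIntegral P.asIdeal ⊥ hker
  exact ⟨⟨Q, hQ⟩, PrimeSpectrum.ext hQP⟩

theorem ringKrullDim_pi_const (ι : Type*) [Finite ι] [Nonempty ι] :
    ringKrullDim (ι → R) = ringKrullDim R :=
  (ringKrullDim_eq_of_isIntegral_of_comap_surjective
    (Algebra.IsIntegral.comap_surjective R (ι → R))).symm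

end KrullDim

theorem ringKrullDim_eq_of_isIntegral_of_ker_le_nilradical {R S : Type*} [CommRing R]
    [CommRing S] (f : R →+* S) (hf : f.IsIntegral) (hker : RingHom.ker f ≤ nilradical R) :
    ringKrullDim R = ringKrullDim S := by
  algebraize [f]
  exact ringKrullDim_eq_of_isIntegral_of_comap_surjective
    (PrimeSpectrum.comap_surjective_of_isIntegral_of_ker_le_nilradical hker)

namespace WittVector

variable {p : ℕ} [hp : Fact p.Prime] {R : Type*} [CommRing R]

local notation "𝕎" => WittVector p

theorem coeff_zero_eq_ghostComponent_zero (x : 𝕎 R) : x.coeff 0 = ghostComponent 0 x := by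
  simp [ghostComponent_apply]

theorem ghostComponent_iterate_frobenius (x : 𝕎 R) (m i : ℕ) :
    ghostComponent i (frobenius^[m] x) = ghostComponent (i + m) x := by
  induction m generalizing i with
  | zero => rfl
  | succ m ih =>
    rw [Function.iterate_succ_apply', ghostComponent_frobenius, ih, add_right_comm, add_assoc]

theorem ghostComponent_eq_zero_of_coeff_eq_zero {x : 𝕎 R} {n : ℕ}
    (hx : ∀ j ≤ n, x.coeff j = 0) : ghostComponent n x = 0 := by
  rw [ghostComponent_apply, aeval_wittPolynomial]
  refine Finset.sum_eq_zero fun j hj ↦ ?_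
  rw [hx j (Nat.lt_succ_iff.mp (Finset.mem_range.mp hj)),
    zero_pow (pow_ne_zero _ hp.out.ne_zero), mul_zero]

theorem coeff_pow_eq_zero_of_ghostComponent_eq_zero {x : 𝕎 R} {n : ℕ}
    (hx : ∀ i < n, ghostComponent i x = 0) : ∀ i < n, (x ^ n).coeff i = 0 := by
  induction n with
  | zero => simp
  | succ n ih =>
    -- `x ^ n = V^n w`, so `x ^ (n + 1) = V^n (w * F^n x)` has `n`-th coefficient `w₀ * w_n(x)`.
    have hxn := eq_iterate_verschiebung (ih fun i hi ↦ hx i (by omega))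
    intro i hi
    rw [pow_succ, hxn, iterate_verschiebung_mul_left]
    rcases Nat.lt_succ_iff_lt_or_eq.mp hi with hi | rfl
    · exact iterate_verschiebung_coeff_eq_zero _ hi
    · have h0 := iterate_verschiebung_coeff ((x ^ i).shift i * frobenius^[i] x) i 0
      rw [zero_add] at h0
      rw [h0, mul_coeff_zero,
        coeff_zero_eq_ghostComponent_zero (frobenius^[i] x), ghostComponent_iterate_frobenius,
        hx _ (by omega), mul_zero]

end WittVector

namespace TruncatedWittVector

open WittVector

variable {p : ℕ} [hp : Fact p.Prime] {n : ℕ} {R : Type*} [CommRing R]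

theorem ker_truncate_le_ker_ghostComponent {i : ℕ} (hi : i < n) :
    RingHom.ker (WittVector.truncate (p := p) (R := R) n) ≤ RingHom.ker (ghostComponent i) :=
  fun x hx ↦ ghostComponent_eq_zero_of_coeff_eq_zero fun j hj ↦
    (WittVector.mem_ker_truncate n x).mp hx j (by omega)

variable (p n R) in
noncomputable def ghostMap : TruncatedWittVector p n R →+* (Fin n → R) :=
  (WittVector.truncate n).liftOfSurjective (WittVector.truncate_surjective p n R)
    ⟨RingHom.pi fun i ↦ ghostComponent i, fun _ hx ↦ funext fun i ↦
      ker_truncate_le_ker_ghostComponent i.isLt hx⟩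

theorem ghostMap_truncate (x : WittVector p R) (i : Fin n) :
    ghostMap p n R (WittVector.truncate n x) i = ghostComponent i x :=
  congrFun ((WittVector.truncate n).liftOfSurjective_comp_apply _ _ x) i

theorem pow_eq_zero_of_ghostMap_eq_zero {x : TruncatedWittVector p n R}
    (hx : ghostMap p n R x = 0) : x ^ n = 0 := by
  obtain ⟨y, rfl⟩ := WittVector.truncate_surjective p n R x
  rw [← map_pow, ← RingHom.mem_ker, WittVector.mem_ker_truncate]
  refine coeff_pow_eq_zero_of_ghostComponent_eq_zero fun j hj ↦ ?_
  simpa [ghostMap_truncate] using congrFun hx ⟨j, hj⟩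

theorem ker_ghostMap_le_nilradical :
    RingHom.ker (ghostMap p n R) ≤ nilradical (TruncatedWittVector p n R) :=
  fun _ hx ↦ ⟨n, pow_eq_zero_of_ghostMap_eq_zero hx⟩

theorem single_pow_eq_ghostMap_teichmuller_mul (i : Fin n) (a : R) :
    Pi.single i a ^ p ^ (i : ℕ) =
      ghostMap p n R (WittVector.truncate n (teichmuller p a)) * Pi.single i 1 := by
  ext j
  rcases eq_or_ne j i with rfl | hj
  · simp [ghostMap_truncate, ghostComponent_teichmuller]
  · simp [hj, hp.out.ne_zero]

theorem isIntegral_ghostMap : (ghostMap p n R).IsIntegral := by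
  let := (ghostMap p n R).toAlgebra
  have hsingle (i : Fin n) (a : R) :
      IsIntegral (TruncatedWittVector p n R) (Pi.single i a : Fin n → R) := by
    have he : IsIntegral (TruncatedWittVector p n R) (Pi.single i 1 : Fin n → R) :=
      ⟨.X ^ 2 - .X, Polynomial.monic_X_pow_sub (Polynomial.degree_X_le.trans_lt (by norm_num)),
        by simp [sq, ← Pi.single_mul]⟩
    refine IsIntegral.of_pow (pow_pos hp.out.pos (i : ℕ)) ?_
    rw [single_pow_eq_ghostMap_teichmuller_mul]
    exact isIntegral_algebraMap.mul he
  intro x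
  rw [← Finset.univ_sum_single x]
  exact IsIntegral.sum _ fun i _ ↦ hsingle i (x i)

end TruncatedWittVector

/-- For any commutative ring `A`, the Krull dimension of `W_n(A)`
(`p`-typical Witt vectors, normalized indexing: `W_n = TruncatedWittVector p (n+1)`)
equals the Krull dimension of `A`. -/
theorem witt_krull_dimension (p : ℕ) [Fact p.Prime] (n : ℕ) (A : Type) [CommRing A] :
    ringKrullDim (TruncatedWittVector p (n + 1) A) = ringKrullDim A := by
  rw [ringKrullDim_eq_of_isIntegral_of_ker_le_nilradical
      (TruncatedWittVector.ghostMap p (n + 1) A)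
      TruncatedWittVector.isIntegral_ghostMap TruncatedWittVector.ker_ghostMap_le_nilradical,
    ringKrullDim_pi_const]
end

section
/- If A is a finite (module-finite) algebra over a discrete valuation ring R with p in the maximal ideal, then W_n(A) is a finite R-algebra. -/
/-!
Induct on the truncation level. The truncation `W_{m+1}(A) → W_m(A)` is surjective and its
kernel consists of the vectors `(0, …, 0, a) = V^m [a]`, so it suffices that `a ↦ (0, …, 0, a)`
is `R`-linear. If `w` is a Witt vector lifting the image of `r`, then
`w · V^m [a] = V^m ([a] · F^m w)`, and the constant coefficient of `F^m w` is the `m`-th ghost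
component of `w`, which is `algebraMap R A r`; hence `r · (0, …, 0, a) = (0, …, 0, r • a)`.
-/

open WittVector

namespace TruncatedWittVector

variable {p : ℕ} [Fact p.Prime] {A : Type*} [CommRing A]

instance : Subsingleton (TruncatedWittVector p 0 A) :=
  inferInstanceAs (Subsingleton (Fin 0 → A))

theorem truncate_iterate_verschiebung (k : ℕ) (x : WittVector p A) :
    WittVector.truncate (k + 1) (verschiebung^[k] x) =
      mk p (Pi.single (Fin.last k) (x.coeff 0)) := by
  ext i
  rw [WittVector.coeff_truncate, coeff_mk]
  rcases (Fin.le_last i).lt_or_eq with hi | rfl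
  · rw [iterate_verschiebung_coeff_eq_zero (n := k) x hi, Pi.single_eq_of_ne hi.ne]
  · simpa using iterate_verschiebung_coeff x k 0

theorem mk_single_last_add (k : ℕ) (a b : A) :
    mk p (Pi.single (Fin.last k) (a + b)) =
      mk p (Pi.single (Fin.last k) a) + mk p (Pi.single (Fin.last k) b) := by
  conv_rhs => rw [← teichmuller_coeff_zero p a, ← teichmuller_coeff_zero p b,
    ← truncate_iterate_verschiebung, ← truncate_iterate_verschiebung, ← map_add,
    ← iterate_map_add verschiebung, truncate_iterate_verschiebung, add_coeff_zero,
    teichmuller_coeff_zero, teichmuller_coeff_zero]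

theorem coeff_zero_iterate_frobenius (k : ℕ) (w : WittVector p A) :
    (frobenius^[k] w).coeff 0 = ghostComponent k w := by
  induction k generalizing w with
  | zero => simp [ghostComponent_apply, wittPolynomial_zero]
  | succ k ih => rw [Function.iterate_succ_apply, ih, ghostComponent_frobenius]

theorem truncate_mul_mk_single_last (k : ℕ) (w : WittVector p A) (a : A) :
    WittVector.truncate (k + 1) w * mk p (Pi.single (Fin.last k) a) =
      mk p (Pi.single (Fin.last k) (ghostComponent k w * a)) := by
  rw [← teichmuller_coeff_zero p a, ← truncate_iterate_verschiebung, ← map_mul, mul_comm,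
    iterate_verschiebung_mul_left, truncate_iterate_verschiebung, mul_coeff_zero,
    coeff_zero_iterate_frobenius, mul_comm]

theorem truncate_mk_single_last (k : ℕ) (a : A) :
    truncate (Nat.le_succ k) (mk p (Pi.single (Fin.last k) a)) = 0 := by
  ext i
  rw [coeff_truncate, coeff_mk, coeff_zero, Pi.single_eq_of_ne]
  exact Fin.ne_of_val_ne (by simp; omega)

theorem eq_mk_single_last_of_truncate_eq_zero {k : ℕ} {x : TruncatedWittVector p (k + 1) A}
    (hx : truncate (Nat.le_succ k) x = 0) :
    x = mk p (Pi.single (Fin.last k) (x.coeff (Fin.last k))) := by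
  ext i
  rw [coeff_mk]
  rcases (Fin.le_last i).lt_or_eq with hi | rfl
  · rw [Pi.single_eq_of_ne hi.ne]
    simpa [coeff_truncate] using congr_arg (coeff ⟨i, hi⟩) hx
  · rw [Pi.single_eq_same]

theorem finite_of_ghostComponent_eq_algebraMap {R : Type*} [CommRing R] [Algebra R A]
    [Module.Finite R A] (m : ℕ) (φ : R →+* TruncatedWittVector p m A)
    (hφ : ∀ r : R, ∃ w : WittVector p A, WittVector.truncate m w = φ r ∧
      ∀ i < m, ghostComponent i w = algebraMap R A r) :
    @Module.Finite R (TruncatedWittVector p m A) _ _ φ.toModule := by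
  induction m with
  | zero => let _ := φ.toModule; infer_instance
  | succ m ih =>
    let _ := φ.toModule
    let φ' := (truncate (Nat.le_succ m)).comp φ
    let _ := φ'.toModule
    have := ih φ' fun r ↦ by
      obtain ⟨w, hw, hghost⟩ := hφ r
      exact ⟨w, by rw [RingHom.comp_apply, ← hw, truncate_wittVector_truncate],
        fun i hi ↦ hghost i (by omega)⟩
    let T : TruncatedWittVector p (m + 1) A →ₗ[R] TruncatedWittVector p m A :=
      { toFun := truncate (Nat.le_succ m)
        map_add' := map_add _
        map_smul' := fun r x ↦ map_mul _ (φ r) x }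
    let L : A →ₗ[R] TruncatedWittVector p (m + 1) A :=
      { toFun := fun a ↦ mk p (Pi.single (Fin.last m) a)
        map_add' := mk_single_last_add m
        map_smul' := fun r a ↦ by
          obtain ⟨w, hw, hghost⟩ := hφ r
          rw [Algebra.smul_def, ← hghost m (lt_add_one m), ← truncate_mul_mk_single_last, hw]
          rfl }
    have hexact : Function.Exact L T := fun x ↦
      ⟨fun hx ↦ ⟨_, (eq_mk_single_last_of_truncate_eq_zero hx).symm⟩,
        by rintro ⟨a, rfl⟩; exact truncate_mk_single_last m a⟩
    exact Module.Finite.of_exact hexact (truncate_surjective (Nat.le_succ m))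

end TruncatedWittVector

theorem witt_finite_over_dvr_general (p : ℕ) [Fact p.Prime] (n : ℕ)
    (R : Type) [CommRing R]
    (A : Type) [CommRing A] [Algebra R A] [Module.Finite R A]
    (φ : R →+* TruncatedWittVector p (n + 1) A)
    (hφ : ∀ r : R, ∃ w : WittVector p A, WittVector.truncate (n + 1) w = φ r ∧
      ∀ i : ℕ, i ≤ n → WittVector.ghostComponent i w = algebraMap R A r) :
    @Module.Finite R (TruncatedWittVector p (n + 1) A) _ _ φ.toModule :=
  TruncatedWittVector.finite_of_ghostComponent_eq_algebraMap (n + 1) φ fun r ↦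
    (hφ r).imp fun _ ⟨hw, hghost⟩ ↦ ⟨hw, fun i hi ↦ hghost i (Nat.lt_succ_iff.mp hi)⟩

/-- If `A` is a finite (module-finite) algebra over a discrete valuation
ring `R` with `p` in the maximal ideal, then `W_n(A)` is a finite `R`-algebra.
(Normalized indexing: `W_n = TruncatedWittVector p (n+1)`.) The `R`-algebra structure on
`W_n(A)` is given by a ring homomorphism `φ : R → W_n(A)` whose ghost components are all
equal to the structure map `R → A` (the canonical structure map of the `E`-typical theory). -/
theorem witt_finite_over_dvr (p : ℕ) [Fact p.Prime] (n : ℕ)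
    (R : Type) [CommRing R] [IsDomain R] [IsDiscreteValuationRing R]
    (hp : (p : R) ∈ IsLocalRing.maximalIdeal R)
    (A : Type) [CommRing A] [Algebra R A] [Module.Finite R A]
    (φ : R →+* TruncatedWittVector p (n + 1) A)
    (hφ : ∀ r : R, ∃ w : WittVector p A, WittVector.truncate (n + 1) w = φ r ∧
      ∀ i : ℕ, i ≤ n → WittVector.ghostComponent i w = algebraMap R A r) :
    @Module.Finite R (TruncatedWittVector p (n + 1) A) _ _ φ.toModule :=
  witt_finite_over_dvr_general p n R A φ hφ
end

section
/- The unital ℤ-algebra ℤ[x,δ]/(x² − p·x, 2x^p·δ + p·δ² − x^p − p·δ + p^{p−1}·x^p), which computes Λ_1 ⊙ ℤ[x]/(x²−px) (the coordinate ring of the first p-typical arithmetic jet space of Spec ℤ[x]/(x²−px)), satisfies 𝔽_p ⊗_ℤ (Λ_1 ⊙ A) ≅ 𝔽_p[x,δ]/(x²); in particular Λ_1 ⊙ A is not flat over ℤ, even though A = ℤ[x]/(x²−px) is flat over ℤ. -/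
open scoped TensorProduct

/-- The ring `ℤ[x]/(x² − p·x)`. -/
def flatBaseRing (p : ℕ) : Type :=
  Polynomial ℤ ⧸ Ideal.span {Polynomial.X ^ 2 - Polynomial.C (p : ℤ) * Polynomial.X}

noncomputable instance (p : ℕ) : CommRing (flatBaseRing p) :=
  inferInstanceAs (CommRing (Polynomial ℤ ⧸ Ideal.span
    {Polynomial.X ^ 2 - Polynomial.C (p : ℤ) * Polynomial.X}))

/-- The ring `ℤ[x,δ]/(x² − p·x, 2x^p·δ + p·δ² − x^p − p·δ + p^(p−1)·x^p)`, which computes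
`Λ_1 ⊙ ℤ[x]/(x²−px)`, the coordinate ring of the first `p`-typical arithmetic jet space of
`Spec ℤ[x]/(x²−px)`. The variable `X 0` is `x` and `X 1` is `δ`. -/
def jetRingOfFlatBase (p : ℕ) : Type :=
  MvPolynomial (Fin 2) ℤ ⧸ Ideal.span
    {MvPolynomial.X 0 ^ 2 - (p : MvPolynomial (Fin 2) ℤ) * MvPolynomial.X 0,
     2 * MvPolynomial.X 0 ^ p * MvPolynomial.X 1
       + (p : MvPolynomial (Fin 2) ℤ) * MvPolynomial.X 1 ^ 2
       - MvPolynomial.X 0 ^ p - (p : MvPolynomial (Fin 2) ℤ) * MvPolynomial.X 1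
       + (p : MvPolynomial (Fin 2) ℤ) ^ (p - 1) * MvPolynomial.X 0 ^ p}

noncomputable instance (p : ℕ) : CommRing (jetRingOfFlatBase p) :=
  inferInstanceAs (CommRing (MvPolynomial (Fin 2) ℤ ⧸ Ideal.span
    {MvPolynomial.X 0 ^ 2 - (p : MvPolynomial (Fin 2) ℤ) * MvPolynomial.X 0,
     2 * MvPolynomial.X 0 ^ p * MvPolynomial.X 1
       + (p : MvPolynomial (Fin 2) ℤ) * MvPolynomial.X 1 ^ 2
       - MvPolynomial.X 0 ^ p - (p : MvPolynomial (Fin 2) ℤ) * MvPolynomial.X 1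
       + (p : MvPolynomial (Fin 2) ℤ) ^ (p - 1) * MvPolynomial.X 0 ^ p}))

/-!
Modulo `p` the two relations become `x²` and `2x^pδ - x^p`, and the latter lies in `(x²)` since
`p ≥ 2`; base change of a quotient of a polynomial ring along `ℤ → 𝔽_p` then gives
`𝔽_p ⊗ Λ_1 ⊙ A ≅ 𝔽_p[x,δ]/(x²)`. Multiplying the second relation by `x` and using
`x^(p+1) ≡ p^p x` modulo `x² - px` shows that `p` kills
`t = x(δ² - δ + p^(p-1)(2δ - 1 + p^(p-1)))`, while `t` reduces to `x(δ² - δ) ∉ (x²)`, so `t` is a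
nonzero `p`-torsion element. Finally `A` is free over `ℤ` because `x² - px` is monic.
-/

open MvPolynomial

namespace MvPolynomial

variable {R A σ : Type*} [CommRing R] [CommRing A] [Algebra R A]

noncomputable def algebraTensorQuotientEquiv (I : Ideal (MvPolynomial σ R)) :
    A ⊗[R] (MvPolynomial σ R ⧸ I) ≃ₐ[A] MvPolynomial σ A ⧸ I.map (map (algebraMap R A)) :=
  (Algebra.TensorProduct.tensorQuotientEquiv A (MvPolynomial σ R) A I).trans <|
    Ideal.quotientEquivAlg _ _ (algebraTensorAlgEquiv R A) <| by
      have h : (algebraTensorAlgEquiv (σ := σ) R A).toRingHom.comp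
          (Algebra.TensorProduct.includeRight : MvPolynomial σ R →ₐ[R] A ⊗[R] MvPolynomial σ R)
          = map (algebraMap R A) := by
        ext <;> simp
      rw [← h, ← Ideal.map_map]
      rfl

theorem not_X_sq_dvd_X_mul_X_sq_sub_X {K : Type*} [CommRing K] [IsDomain K] :
    ¬ (X 0 ^ 2 : MvPolynomial (Fin 2) K) ∣ X 0 * (X 1 ^ 2 - X 1) := by
  rw [pow_two, mul_dvd_mul_iff_left (X_ne_zero 0)]
  rintro ⟨c, hc⟩
  have h := congrArg (fun q ↦ Polynomial.coeff (aeval ![(0 : Polynomial K), Polynomial.X] q) 2) hc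
  simp [Polynomial.coeff_X] at h

end MvPolynomial

/-- `jetRingOfFlatBase p` is, by definition, `MvPolynomial (Fin 2) ℤ ⧸ jetIdeal p`. -/
noncomputable def jetIdeal (p : ℕ) : Ideal (MvPolynomial (Fin 2) ℤ) :=
  Ideal.span {X 0 ^ 2 - (p : MvPolynomial (Fin 2) ℤ) * X 0,
    2 * X 0 ^ p * X 1 + (p : MvPolynomial (Fin 2) ℤ) * X 1 ^ 2
      - X 0 ^ p - (p : MvPolynomial (Fin 2) ℤ) * X 1
      + (p : MvPolynomial (Fin 2) ℤ) ^ (p - 1) * X 0 ^ p}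

noncomputable def jetTorsionPoly (p : ℕ) : MvPolynomial (Fin 2) ℤ :=
  X 0 * (X 1 ^ 2 - X 1 + (p : MvPolynomial (Fin 2) ℤ) ^ (p - 1) *
    (2 * X 1 - 1 + (p : MvPolynomial (Fin 2) ℤ) ^ (p - 1)))

theorem natCast_mul_jetTorsionPoly_mem_jetIdeal (p : ℕ) :
    (p : MvPolynomial (Fin 2) ℤ) * jetTorsionPoly p ∈ jetIdeal p := by
  cases p with
  | zero => simp
  | succ q =>
    -- `p t = x g₂ - (2δ - 1 + p^(p-1)) x (x^p - p^p)` and `x - p ∣ x^p - p^p`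
    obtain ⟨c, hc⟩ := sub_dvd_pow_sub_pow (X 0 : MvPolynomial (Fin 2) ℤ) (q + 1 : ℕ) (q + 1)
    rw [jetIdeal, Ideal.mem_span_pair]
    refine ⟨-(2 * X 1 - 1 + ((q + 1 : ℕ) : MvPolynomial (Fin 2) ℤ) ^ q) * c, X 0, ?_⟩
    simp only [jetTorsionPoly, Nat.add_sub_cancel]
    push_cast at hc ⊢
    linear_combination ((2 * X 1 - 1 + ((q : MvPolynomial (Fin 2) ℤ) + 1) ^ q) * X 0) * hc

section

variable (p : ℕ) [hp : Fact p.Prime]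

theorem jetIdeal_map_zmod :
    (jetIdeal p).map (map (algebraMap ℤ (ZMod p))) = Ideal.span {X 0 ^ 2} := by
  have hp1 : p - 1 ≠ 0 := Nat.sub_ne_zero_of_lt hp.out.one_lt
  rw [jetIdeal, Ideal.map_span, Set.image_pair]
  simp only [map_sub, map_add, map_mul, map_pow, map_X, map_natCast, MvPolynomial.map_ofNat,
    CharP.cast_eq_zero, zero_mul, sub_zero, add_zero, zero_pow hp1,
    Ideal.span_pair_eq_span_left_iff_dvd]
  exact dvd_sub (dvd_mul_of_dvd_left (dvd_mul_of_dvd_right (pow_dvd_pow _ hp.out.two_le) _) _)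
    (pow_dvd_pow _ hp.out.two_le)

theorem map_zmod_jetTorsionPoly :
    map (algebraMap ℤ (ZMod p)) (jetTorsionPoly p) = X 0 * (X 1 ^ 2 - X 1) := by
  have hp1 : p - 1 ≠ 0 := Nat.sub_ne_zero_of_lt hp.out.one_lt
  simp [jetTorsionPoly, zero_pow hp1]

theorem jetTorsionPoly_notMem_jetIdeal : jetTorsionPoly p ∉ jetIdeal p := fun h ↦ by
  have := Ideal.mem_map_of_mem (map (algebraMap ℤ (ZMod p))) h
  rw [jetIdeal_map_zmod, Ideal.mem_span_singleton, map_zmod_jetTorsionPoly] at this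
  exact not_X_sq_dvd_X_mul_X_sq_sub_X this

noncomputable def zmodTensorJetRingEquiv : (ZMod p) ⊗[ℤ] jetRingOfFlatBase p ≃+*
    (MvPolynomial (Fin 2) (ZMod p) ⧸ Ideal.span {(X 0 : MvPolynomial (Fin 2) (ZMod p)) ^ 2}) :=
  (algebraTensorQuotientEquiv (jetIdeal p)).toRingEquiv.trans
    (Ideal.quotEquivOfEq (jetIdeal_map_zmod p))

theorem jetRingOfFlatBase_not_flat : ¬ Module.Flat ℤ (jetRingOfFlatBase p) := by
  intro hflat
  let t : jetRingOfFlatBase p := Ideal.Quotient.mk (jetIdeal p) (jetTorsionPoly p)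
  have ht : t ≠ 0 := fun h ↦
    jetTorsionPoly_notMem_jetIdeal p (Ideal.Quotient.eq_zero_iff_mem.mp h)
  have hpt : (p : ℤ) • t = 0 := by
    change (p : ℤ) • Ideal.Quotient.mk (jetIdeal p) (jetTorsionPoly p) = 0
    rw [← map_zsmul, Ideal.Quotient.eq_zero_iff_mem, natCast_zsmul, nsmul_eq_mul]
    exact natCast_mul_jetTorsionPoly_mem_jetIdeal p
  have hreg : IsSMulRegular (jetRingOfFlatBase p) (p : ℤ) :=
    Module.Flat.isSMulRegular_of_isRegular
      (IsRegular.of_ne_zero (by exact_mod_cast hp.out.ne_zero))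
  exact ht (hreg (hpt.trans (smul_zero _).symm))

end

theorem flatBaseRing_flat (p : ℕ) : Module.Flat ℤ (flatBaseRing p) := by
  have hmonic : (Polynomial.X ^ 2 - Polynomial.C (p : ℤ) * Polynomial.X).Monic :=
    Polynomial.monic_X_pow_sub ((Polynomial.degree_C_mul_X_le _).trans_lt (by norm_num))
  have := hmonic.free_quotient
  exact (inferInstance : Module.Flat ℤ
    (Polynomial ℤ ⧸ Ideal.span {Polynomial.X ^ 2 - Polynomial.C (p : ℤ) * Polynomial.X}))

/-- The ring `Λ_1 ⊙ A = ℤ[x,δ]/(x² − px, 2x^pδ + pδ² − x^p − pδ + p^(p−1)x^p)`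
(the coordinate ring of the first `p`-typical arithmetic jet space of
`Spec A`, `A = ℤ[x]/(x²−px)`) satisfies `𝔽_p ⊗_ℤ (Λ_1 ⊙ A) ≅ 𝔽_p[x,δ]/(x²)`;
in particular `Λ_1 ⊙ A` is not flat over `ℤ`, even though `A` is flat over `ℤ`. -/
theorem jet_of_flat_not_flat (p : ℕ) [Fact p.Prime] :
    Nonempty ((ZMod p) ⊗[ℤ] jetRingOfFlatBase p ≃+*
      (MvPolynomial (Fin 2) (ZMod p) ⧸
        Ideal.span {(MvPolynomial.X 0 : MvPolynomial (Fin 2) (ZMod p)) ^ 2})) ∧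
    ¬ Module.Flat ℤ (jetRingOfFlatBase p) ∧
    Module.Flat ℤ (flatBaseRing p) :=
  ⟨⟨zmodTensorJetRingEquiv p⟩, jetRingOfFlatBase_not_flat p, flatBaseRing_flat p⟩
end
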